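/- arXiv:2204.10924 — 10 statements merged into one kernel-verified Lean document; each statement's English description precedes it below -/
import Mathlib

section
/- Let K be a nonarchimedean local field with ring of integers O_K, and let O be an order in a finite-rank étale K-algebra L. Then a fractional O-ideal is invertible if and only if it is principal. -/
universe v

/-! `O` is finite over the local ring `O_K`, so every maximal ideal of `O` lies over the maximal
ideal of `O_K` and `O` is semilocal. The Picard group of a semilocal ring is trivial, so an
invertible `O`-submodule of `L` is isomorphic to `O`, hence generated by a single element, which
must be a unit of `L`. -/

open IsLocalRing in
theorem Module.Finite.finite_maximalSpectrum (R S : Type*) [CommRing R] [IsLocalRing R]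
    [CommRing S] [Algebra R S] [Module.Finite R S] : Finite (MaximalSpectrum S) := by
  have h_liesOver (P : MaximalSpectrum S) : P.asIdeal ∈ (maximalIdeal R).primesOver S := by
    have : (P.asIdeal.comap (algebraMap R S)).IsMaximal :=
      Ideal.isMaximal_comap_of_isIntegral_of_isMaximal P.asIdeal
    exact ⟨inferInstance, ⟨(eq_maximalIdeal this).symm⟩⟩
  have := (Algebra.QuasiFinite.finite_primesOver (S := S) (maximalIdeal R)).to_subtype
  exact .of_injective (fun P ↦ (⟨P.asIdeal, h_liesOver P⟩ : (maximalIdeal R).primesOver S))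
    fun P Q h ↦ MaximalSpectrum.ext (congrArg Subtype.val h)

theorem Submodule.isUnit_iff_exists_eq_span_singleton {R A : Type*} [CommRing R]
    [Finite (MaximalSpectrum R)] [Semiring A] [Algebra R A] [FaithfulSMul R A]
    (I : Submodule R A) : IsUnit I ↔ ∃ α : Aˣ, I = span R {(α : A)} := by
  constructor
  · rintro ⟨u, rfl⟩
    have : u ∈ (unitsToPic R A).ker := Subsingleton.elim _ _
    obtain ⟨α, hα⟩ := ker_unitsToPic R A ▸ this
    exact ⟨α, congrArg Units.val hα.symm⟩
  · rintro ⟨α, rfl⟩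
    exact (Units.map (spanSingleton R).toMonoidHom α).isUnit

theorem stmt_0_general
    (O_K O : Type*) (L : Type v)
    [CommRing O_K] [IsDomain O_K] [IsDiscreteValuationRing O_K]
    [CommRing L]
    [CommRing O] [Algebra O_K O] [Algebra O L]
    (hOinj : Function.Injective (algebraMap O L))
    [Module.Finite O_K O]
    (a : Submodule O L) :
    (∃ b : Submodule O L, a * b = 1) ↔ ∃ α : Lˣ, a = Submodule.span O {(α : L)} := by
  have := Module.Finite.finite_maximalSpectrum O_K O
  have := (faithfulSMul_iff_algebraMap_injective O L).mpr hOinj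
  rw [← isUnit_iff_exists_inv]
  exact a.isUnit_iff_exists_eq_span_singleton

/-- Let `K` be a nonarchimedean local field with ring of integers `O_K`
(a complete discrete valuation ring with finite residue field), and let `O` be an order in a
finite-rank étale `K`-algebra `L`.  Then a fractional `O`-ideal (a finitely generated full
`O`-submodule of `L`) is invertible if and only if it is principal (generated by a unit of `L`). -/
theorem stmt_0
    (O_K O : Type*) (K L : Type v)
    [CommRing O_K] [IsDomain O_K] [IsDiscreteValuationRing O_K]
    [IsAdicComplete (IsLocalRing.maximalIdeal O_K) O_K]
    [Finite (IsLocalRing.ResidueField O_K)]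
    [Field K] [Algebra O_K K] [IsFractionRing O_K K]
    [CommRing L] [Algebra K L] [Module.Finite K L] [Algebra.Etale K L]
    [CommRing O] [Algebra O_K O] [Algebra O L] [Algebra O_K L]
    [IsScalarTower O_K O L] [IsScalarTower O_K K L]
    (hOinj : Function.Injective (algebraMap O L))
    [Module.Finite O_K O]
    (hOfull : Submodule.span K (Set.range (algebraMap O L)) = ⊤)
    (a : Submodule O L) (haFG : a.FG)
    (hafull : Submodule.span K (a : Set L) = ⊤) :
    (∃ b : Submodule O L, a * b = 1) ↔ ∃ α : Lˣ, a = Submodule.span O {(α : L)} :=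
  stmt_0_general O_K O L hOinj a
end

section
/- Let K be a nonarchimedean local field and let O be an order in a finite-rank étale K-algebra L. Then L decomposes as a product L = L_1 × ⋯ × L_s of products of its field factors, such that O = O_1 × ⋯ × O_s is the product of orders O_i ⊆ L_i, where each O_i has a unique maximal ideal lying over the maximal ideal of O_K (so every element of O_i not in that maximal ideal is a unit). -/
/-!
`O` is a finite module over the complete noetherian local ring `O_K`, hence `p`-adically complete
and therefore henselian along `pO`. The quotient `O / pO` is a finite-dimensional algebra over the
residue field, so it is artinian and splits as the product of its localizations at its finitely
many maximal ideals. Hensel's lemma for `X ^ 2 - X` lifts the corresponding idempotents to `O`, and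
since `pO` lies in the Jacobson radical, each corner `O e` is local. The decomposition of `L` is
the image of that of `O`.
-/

universe v

open AdicCompletion in
theorem IsPrecomplete.of_finite {R M : Type*} [CommRing R] [AddCommGroup M] [Module R M]
    (I : Ideal R) [IsPrecomplete I R] [Module.Finite R M] : IsPrecomplete I M := by
  rw [← of_surjective_iff]
  have hof : ⇑(of I M) =
      ofTensorProduct I M ∘ (of I R).rTensor M ∘ (TensorProduct.lid R M).symm := by
    ext x
    have : of I R 1 = 1 := map_one (algebraMap R (AdicCompletion I R))
    simp [this]
  rw [hof]
  exact (ofTensorProduct_surjective_of_finite I M).comp <|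
    (LinearMap.rTensor_surjective M (of_surjective I R)).comp
      (TensorProduct.lid R M).symm.surjective

section Idempotents

open Polynomial

variable {R : Type*} [CommRing R]

theorem IsIdempotentElem.eq_of_sub_mem_jacobson_bot {e f : R} (he : IsIdempotentElem e)
    (hf : IsIdempotentElem f) (h : e - f ∈ (⊥ : Ideal R).jacobson) : e = f := by
  -- `d := e - f` satisfies `d ^ 3 = d`, and `1 - d ^ 2` is a unit.
  have hcube : (e - f) * (1 - (e - f) * (e - f)) = 0 := by
    linear_combination (3 * f - e - 1) * he.eq + (1 + f - 3 * e) * hf.eq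
  have hunit : IsUnit (1 - (e - f) * (e - f)) := by
    simpa [sub_eq_neg_add] using
      Ideal.mem_jacobson_bot.mp (Ideal.mul_mem_left _ (e - f) h) (-1)
  exact sub_eq_zero.mp (hunit.mul_left_eq_zero.mp hcube)

theorem IsIdempotentElem.exists_lift_of_henselianRing (I : Ideal R) [HenselianRing R I]
    {a : R ⧸ I} (ha : IsIdempotentElem a) :
    ∃ e : R, IsIdempotentElem e ∧ Ideal.Quotient.mk I e = a := by
  obtain ⟨a₀, rfl⟩ := Ideal.Quotient.mk_surjective a
  nontriviality R
  have hmonic : (X ^ 2 - X : R[X]).Monic :=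
    (monic_X_pow 2).sub_of_left (by rw [degree_X_pow, degree_X]; norm_num)
  have hroot : (X ^ 2 - X : R[X]).eval a₀ ∈ I := by
    rw [← Ideal.Quotient.eq_zero_iff_mem]
    simpa [sq, sub_eq_zero] using ha.eq
  -- The derivative `2 X - 1` is a unit at an idempotent: `(2 a - 1) ^ 2 = 1`.
  have hderiv : IsUnit (Ideal.Quotient.mk I ((derivative (X ^ 2 - X : R[X])).eval a₀)) := by
    refine IsUnit.of_mul_eq_one (2 * Ideal.Quotient.mk I a₀ - 1) ?_
    simp only [derivative_X_pow_succ, Nat.cast_one, map_add, map_one, pow_one,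
      derivative_X, eval_sub, eval_mul, eval_add, eval_one, eval_X, map_sub, map_mul]
    linear_combination 4 * ha.eq
  obtain ⟨e, he, heI⟩ := HenselianRing.is_henselian _ hmonic a₀ hroot hderiv
  refine ⟨e, ?_, (Ideal.Quotient.mk_eq_mk_iff_sub_mem _ _).mpr heI⟩
  simp only [IsRoot, eval_sub, eval_pow, eval_X, sub_eq_zero] at he
  rw [IsIdempotentElem, ← sq, he]

theorem CompleteOrthogonalIdempotents.exists_lift_of_henselianRing {ι : Type*} [Fintype ι]
    (I : Ideal R) [HenselianRing R I] {a : ι → R ⧸ I} (ha : CompleteOrthogonalIdempotents a) :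
    ∃ e : ι → R, CompleteOrthogonalIdempotents e ∧ ∀ i, Ideal.Quotient.mk I (e i) = a i := by
  have hjac : I ≤ (⊥ : Ideal R).jacobson := HenselianRing.jac
  choose e he hea using fun i ↦ (ha.idem i).exists_lift_of_henselianRing I
  have hortho : Pairwise fun i j ↦ e i * e j = 0 := fun i j hij ↦
    ((he i).mul (he j)).eq_of_sub_mem_jacobson_bot .zero <| hjac <| by
      rw [sub_zero, ← Ideal.Quotient.eq_zero_iff_mem, map_mul, hea, hea]
      exact ha.ortho hij
  have horth : OrthogonalIdempotents e := ⟨he, hortho⟩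
  refine ⟨e, ⟨horth, ?_⟩, hea⟩
  refine horth.isIdempotentElem_sum.eq_of_sub_mem_jacobson_bot .one <| hjac ?_
  rw [← Ideal.Quotient.eq_zero_iff_mem, map_sub, map_sum, map_one]
  simp only [hea, ha.complete, sub_self]

end Idempotents

theorem isLocalRing_quotient_span_one_sub {R ι : Type*} [CommRing R] [DecidableEq ι]
    {A : ι → Type*} [∀ i, CommRing (A i)] [∀ i, IsLocalRing (A i)]
    (f : R →+* ∀ i, A i) [IsLocalHom f] {e : R} {i : ι} (he : f e = Pi.single i 1) :
    IsLocalRing (R ⧸ Ideal.span {1 - e}) := by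
  set q := Ideal.Quotient.mk (Ideal.span {1 - e})
  -- Modulo `1 - e`, the element `z` agrees with `z e + (1 - e)`, whose image under `f` is `f z`
  -- in the `i`-th factor and `1` elsewhere.
  have hunit : ∀ z, IsUnit (f z i) → IsUnit (q z) := by
    intro z hz
    have hqz : q (z * e + (1 - e)) = q z := by
      rw [Ideal.Quotient.mk_eq_mk_iff_sub_mem]
      exact Ideal.mem_span_singleton'.mpr ⟨1 - z, by ring⟩
    rw [← hqz]
    refine (isUnit_of_map_unit f _ (Pi.isUnit_iff.mpr fun j ↦ ?_)).map q
    rw [map_add, map_mul, map_sub, map_one, he]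
    by_cases hj : j = i
    · subst hj
      simpa using hz
    · simp [hj]
  have : Nontrivial (R ⧸ Ideal.span {1 - e}) := by
    refine Ideal.Quotient.nontrivial_iff.mpr fun htop ↦ not_isUnit_zero (M₀ := A i) ?_
    simpa [he] using (IsUnit.map f (Ideal.span_singleton_eq_top.mp htop)).apply i
  refine .of_isUnit_or_isUnit_one_sub_self fun a ↦ ?_
  obtain ⟨z, rfl⟩ := Ideal.Quotient.mk_surjective a
  refine (IsLocalRing.isUnit_or_isUnit_one_sub_self (f z i)).imp (hunit z) fun h ↦ ?_
  simpa using hunit (1 - z) (by simpa using h)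

theorem exists_completeOrthogonalIdempotents_isLocalRing_quotient {R : Type*} [CommRing R]
    (I : Ideal R) [HenselianRing R I] [IsArtinianRing (R ⧸ I)] :
    ∃ (s : ℕ) (e : Fin s → R), CompleteOrthogonalIdempotents e ∧
      ∀ i, IsLocalRing (R ⧸ Ideal.span {1 - e i}) := by
  classical
  let E := MaximalSpectrum.toPiLocalizationEquiv (R ⧸ I)
  have := Fintype.ofFinite (MaximalSpectrum (R ⧸ I))
  let σ := (Fintype.equivFin (MaximalSpectrum (R ⧸ I))).symm
  have hsingle : CompleteOrthogonalIdempotents fun i ↦ E.symm (Pi.single (σ i) 1) :=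
    ((CompleteOrthogonalIdempotents.equiv σ).mpr (.single _)).map E.symm.toRingHom
  obtain ⟨e, he, hlift⟩ := hsingle.exists_lift_of_henselianRing I
  have : IsLocalHom (Ideal.Quotient.mk I) := isLocalHom_of_le_jacobson_bot I HenselianRing.jac
  let f : R →+* MaximalSpectrum.PiLocalization (R ⧸ I) :=
    (E.toRingEquiv : R ⧸ I →+* _).comp (Ideal.Quotient.mk I)
  refine ⟨_, e, he, fun i ↦ isLocalRing_quotient_span_one_sub f (i := σ i) ?_⟩
  simp [f, hlift]

theorem Algebra.Etale.quotient_span_one_sub {K L : Type*} [CommRing K] [CommRing L] [Algebra K L]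
    [Algebra.Etale K L] {e : L} (he : IsIdempotentElem e) :
    Algebra.Etale K (L ⧸ Ideal.span {1 - e}) :=
  have : IsLocalization.Away e (L ⧸ Ideal.span {1 - e}) :=
    IsLocalization.Away.quotient_of_isIdempotentElem he
  have : Algebra.Etale L (L ⧸ Ideal.span {1 - e}) := .of_isLocalizationAway e
  .comp K L _

theorem stmt_1_general
    (O_K O : Type*) (K L : Type v)
    [CommRing O_K] [IsDomain O_K] [IsDiscreteValuationRing O_K]
    [IsAdicComplete (IsLocalRing.maximalIdeal O_K) O_K]
    [Field K]
    [CommRing L] [Algebra K L] [Algebra.Etale K L]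
    [CommRing O] [Algebra O_K O] [Algebra O L]
    [Module.Finite O_K O] :
    ∃ (s : ℕ) (e : Fin s → O),
      (∀ i, e i * e i = e i) ∧
      (∀ i j, i ≠ j → e i * e j = 0) ∧
      (∑ i, e i) = 1 ∧
      (∀ i, e i ≠ 0) ∧
      Function.Bijective
        (fun (x : O) => fun i : Fin s => Ideal.Quotient.mk (Ideal.span {1 - e i}) x) ∧
      (∀ i, IsLocalRing (O ⧸ Ideal.span {1 - e i})) ∧
      Function.Bijective
        (fun (x : L) => fun i : Fin s =>
          Ideal.Quotient.mk (Ideal.span {1 - algebraMap O L (e i)}) x) ∧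
      (∀ i, Algebra.Etale K (L ⧸ Ideal.span {1 - algebraMap O L (e i)})) := by
  set p := IsLocalRing.maximalIdeal O_K
  have : IsPrecomplete p O := .of_finite p
  have : IsAdicComplete (p.map (algebraMap O_K O)) O :=
    (IsAdicComplete.map_algebraMap_iff p O).mpr {}
  let := Ideal.Quotient.field p
  have : IsArtinianRing (O ⧸ p.map (algebraMap O_K O)) := .of_finite (O_K ⧸ p) _
  obtain ⟨s, e, he, hloc⟩ :=
    exists_completeOrthogonalIdempotents_isLocalRing_quotient (p.map (algebraMap O_K O))
  have hne : ∀ i, e i ≠ 0 := fun i h ↦ by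
    simpa [h] using Ideal.Quotient.nontrivial_iff.mp (hloc i).toNontrivial
  exact ⟨s, e, he.idem, fun i j hij ↦ he.ortho hij, he.complete, hne, he.bijective_pi, hloc,
    (he.map (algebraMap O L)).bijective_pi,
    fun i ↦ .quotient_span_one_sub ((he.idem i).map (algebraMap O L))⟩

/-- Let `K` be a nonarchimedean local field and `O` an order in a finite-rank
étale `K`-algebra `L`.  Then `L` decomposes as a finite product `L = L₁ × ⋯ × Lₛ` of étale
`K`-algebras (products of the field factors of `L`) in such a way that `O = O₁ × ⋯ × Oₛ` is the
product of orders `Oᵢ ⊆ Lᵢ`, where each `Oᵢ` is a local ring (it has a unique maximal ideal, so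
every element of `Oᵢ` outside that ideal is a unit).  The decomposition is expressed here via a
complete system of nonzero orthogonal idempotents `e i ∈ O`. -/
theorem stmt_1
    (O_K O : Type*) (K L : Type v)
    [CommRing O_K] [IsDomain O_K] [IsDiscreteValuationRing O_K]
    [IsAdicComplete (IsLocalRing.maximalIdeal O_K) O_K]
    [Finite (IsLocalRing.ResidueField O_K)]
    [Field K] [Algebra O_K K] [IsFractionRing O_K K]
    [CommRing L] [Algebra K L] [Module.Finite K L] [Algebra.Etale K L]
    [CommRing O] [Algebra O_K O] [Algebra O L] [Algebra O_K L]
    [IsScalarTower O_K O L] [IsScalarTower O_K K L]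
    (hOinj : Function.Injective (algebraMap O L))
    [Module.Finite O_K O]
    (hOfull : Submodule.span K (Set.range (algebraMap O L)) = ⊤) :
    ∃ (s : ℕ) (e : Fin s → O),
      (∀ i, e i * e i = e i) ∧
      (∀ i j, i ≠ j → e i * e j = 0) ∧
      (∑ i, e i) = 1 ∧
      (∀ i, e i ≠ 0) ∧
      Function.Bijective
        (fun (x : O) => fun i : Fin s => Ideal.Quotient.mk (Ideal.span {1 - e i}) x) ∧
      (∀ i, IsLocalRing (O ⧸ Ideal.span {1 - e i})) ∧
      Function.Bijective
        (fun (x : L) => fun i : Fin s =>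
          Ideal.Quotient.mk (Ideal.span {1 - algebraMap O L (e i)}) x) ∧
      (∀ i, Algebra.Etale K (L ⧸ Ideal.span {1 - algebraMap O L (e i)})) :=
  stmt_1_general O_K O K L
end

section
/- A finite-dimensional vector space over a finite field k cannot be written as the union of fewer than |k| + 1 proper subspaces. -/
/-!
A proper subspace `W` of `V` has additive index `|V ⧸ W| ≥ |k|`. By B. H. Neumann's lemma, subgroups
covering a group satisfy `∑ 1 / index ≥ 1`, so at least `|k|` proper subspaces are needed; with exactly
`|k|` the sum equals `1`, which forces the subgroups to be pairwise disjoint, impossible as they all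
contain `0`.
-/

open scoped Pointwise

@[to_additive]
theorem Subgroup.lt_card_of_biUnion_eq_univ {G ι : Type*} [Group G] {H : ι → Subgroup G}
    {s : Finset ι} (hcovers : ⋃ i ∈ s, (H i : Set G) = Set.univ) {n : ℕ} (hn : 2 ≤ n)
    (hindex : ∀ i ∈ s, n ≤ (H i).index) : n < s.card := by
  classical
  have hcovers' : ⋃ i ∈ s, (1 : G) • (H i : Set G) = Set.univ := by
    simpa only [one_smul] using hcovers
  have hn_pos : (0 : ℚ) < n := by positivity
  have hsum_ge := one_le_sum_inv_index_of_leftCoset_cover hcovers'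
  have hsum_le : ∑ i ∈ s, ((H i).index : ℚ)⁻¹ ≤ s.card / n :=
    calc ∑ i ∈ s, ((H i).index : ℚ)⁻¹
        ≤ ∑ _i ∈ s, (n : ℚ)⁻¹ :=
          Finset.sum_le_sum fun i hi ↦ inv_anti₀ hn_pos (by exact_mod_cast hindex i hi)
      _ = s.card / n := by rw [Finset.sum_const, nsmul_eq_mul, div_eq_mul_inv]
  have hle : n ≤ s.card := by
    exact_mod_cast (one_le_div hn_pos).mp (hsum_ge.trans hsum_le)
  refine hle.lt_of_ne fun heq ↦ ?_
  have hsum_eq : ∑ i ∈ s, ((H i).index : ℚ)⁻¹ = 1 := by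
    refine le_antisymm ?_ hsum_ge
    rwa [← heq, div_self hn_pos.ne'] at hsum_le
  have hdisj := pairwiseDisjoint_leftCoset_cover_of_sum_inv_index_eq_one hcovers' hsum_eq
  have hfiltered : ∀ i ∈ s, i ∈ s.filter (fun i ↦ (H i).FiniteIndex) := fun i hi ↦
    Finset.mem_filter.mpr ⟨hi, ⟨by have := hindex i hi; omega⟩⟩
  obtain ⟨i, hi, j, hj, hij⟩ := Finset.one_lt_card.mp (heq ▸ hn)
  exact Set.not_disjoint_iff.mpr ⟨1, by simp, by simp⟩
    (hdisj (hfiltered i hi) (hfiltered j hj) hij)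

theorem Submodule.card_le_index_toAddSubgroup {k V : Type*} [DivisionRing k] [AddCommGroup V]
    [Module k V] [Finite V] {W : Submodule k V} (hW : W ≠ ⊤) :
    Nat.card k ≤ W.toAddSubgroup.index := by
  have : Nontrivial (V ⧸ W) := Submodule.Quotient.nontrivial_iff.mpr hW
  have : Finite (V ⧸ W) := Finite.of_surjective _ W.mkQ_surjective
  obtain ⟨x, hx⟩ := exists_ne (0 : V ⧸ W)
  exact Nat.card_le_card_of_injective (β := V ⧸ W) _ (smul_left_injective k hx)

theorem stmt_3_general
    (k V : Type*) [Field k] [Fintype k]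
    [AddCommGroup V] [Module k V] [FiniteDimensional k V]
    (s : Finset (Submodule k V))
    (hproper : ∀ W ∈ s, W ≠ ⊤)
    (hcard : s.card ≤ Fintype.card k) :
    (⋃ W ∈ s, (W : Set V)) ≠ Set.univ := by
  intro hcovers
  have : Finite V := Module.finite_of_finite k
  have hindex : ∀ W ∈ s, Fintype.card k ≤ W.toAddSubgroup.index := fun W hW ↦
    Fintype.card_eq_nat_card (α := k) ▸ Submodule.card_le_index_toAddSubgroup (hproper W hW)
  have hcovers' : ⋃ W ∈ s, (W.toAddSubgroup : Set V) = Set.univ := by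
    simpa only [Submodule.coe_toAddSubgroup] using hcovers
  exact hcard.not_gt
    (AddSubgroup.lt_card_of_biUnion_eq_univ hcovers' Fintype.one_lt_card hindex)

/-- A (nontrivial) finite-dimensional vector space over a finite field `k`
cannot be written as the union of fewer than `|k| + 1` proper subspaces. -/
theorem stmt_3
    (k V : Type*) [Field k] [Fintype k]
    [AddCommGroup V] [Module k V] [FiniteDimensional k V] [Nontrivial V]
    (s : Finset (Submodule k V))
    (hproper : ∀ W ∈ s, W ≠ ⊤)
    (hcard : s.card ≤ Fintype.card k) :
    (⋃ W ∈ s, (W : Set V)) ≠ Set.univ :=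
  stmt_3_general k V s hproper hcard
end

section
/- Every integer symmetric 3×3 matrix A with det A = 1 is GL_3(Z)-congruent (A ↦ UAU^T for U ∈ GL_3(Z)) either to the matrix with rows (0,0,1),(0,−1,0),(1,0,0) or to the identity matrix. -/
/-!
Write `Q(x) = xᵀ A x`. If `Q` represents `0` nontrivially, a primitive isotropic vector can be
completed to a basis; in that basis `det A = 1` forces the first row to be primitive, so one can
arrange the first row to be `(0, 1, 0)`, and clearing the rest leaves a hyperbolic plane
`[[0, 1], [1, ε]]` (`ε ∈ {0, 1}`) plus `⟨-1⟩`, which is congruent to the first target.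

Otherwise take a primitive `v` for which `|Q v| = |a|` is minimal and put it first in a basis.
Completing the square, `a Q(x, y, z) = (a x + …)² + Q'(y, z)` with a binary form `Q'` of
determinant `a`. A reduced binary form has a nonzero value `d` with `d² ≤ 4 |a|`, and shifting `x`
makes the square at most `a² / 4`, so minimality gives `a² ≤ a² / 4 + |d|`, forcing `|a| = 1`.
Splitting off `⟨a⟩` leaves a unimodular binary form, and anisotropy rules out everything but the
identity.
-/

open Matrix

namespace UnimodularTernary

section Congruence

variable {n R : Type*} [Fintype n] [DecidableEq n] [CommRing R]

def Congruent (A B : Matrix n n R) : Prop :=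
  ∃ U : Matrix n n R, IsUnit U.det ∧ U * A * Uᵀ = B

theorem Congruent.trans {A B C : Matrix n n R} (hAB : Congruent A B) (hBC : Congruent B C) :
    Congruent A C := by
  obtain ⟨U, hU, rfl⟩ := hAB
  obtain ⟨V, hV, rfl⟩ := hBC
  exact ⟨V * U, by simpa [det_mul] using hV.mul hU, by simp [Matrix.mul_assoc, transpose_mul]⟩

theorem Congruent.isSymm {A B : Matrix n n R} (h : Congruent A B) (hA : A.IsSymm) :
    B.IsSymm := by
  obtain ⟨U, -, rfl⟩ := h
  simp [IsSymm, transpose_mul, Matrix.mul_assoc, hA.eq]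

theorem Congruent.det_eq {A B : Matrix n n ℤ} (h : Congruent A B) : B.det = A.det := by
  obtain ⟨U, hU, rfl⟩ := h
  rcases Int.isUnit_iff.mp hU with hU | hU <;> simp [det_mul, hU]

theorem toQuadraticForm'_apply (A : Matrix n n R) (v : n → R) :
    A.toQuadraticForm' v = v ⬝ᵥ A *ᵥ v := by
  simp [toQuadraticForm', toLinearMap₂'_apply']

theorem toQuadraticForm'_single (A : Matrix n n R) (i : n) :
    A.toQuadraticForm' (Pi.single i 1) = A i i := by
  simp [toQuadraticForm'_apply]

omit [DecidableEq n] in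
theorem mul_mul_transpose_apply (U A : Matrix n n R) (i j : n) :
    (U * A * Uᵀ) i j = U i ⬝ᵥ A *ᵥ U j := by
  rw [mul_apply', dotProduct_mulVec]
  rfl

theorem mul_mul_transpose_apply_self (U A : Matrix n n R) (i : n) :
    (U * A * Uᵀ) i i = A.toQuadraticForm' (U i) := by
  rw [mul_mul_transpose_apply, toQuadraticForm'_apply]

theorem toQuadraticForm'_mul_mul_transpose (U A : Matrix n n R) (v : n → R) :
    (U * A * Uᵀ).toQuadraticForm' v = A.toQuadraticForm' (v ᵥ* U) := by
  simp only [toQuadraticForm'_apply, ← mulVec_mulVec, mulVec_transpose, dotProduct_mulVec]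

theorem Congruent.exists_toQuadraticForm'_eq {A B : Matrix n n R} (h : Congruent A B)
    (w : n → R) : ∃ v, B.toQuadraticForm' w = A.toQuadraticForm' v := by
  obtain ⟨U, -, rfl⟩ := h
  exact ⟨w ᵥ* U, toQuadraticForm'_mul_mul_transpose U A w⟩

theorem Congruent.anisotropic {A B : Matrix n n R} (h : Congruent A B)
    (hA : A.toQuadraticForm'.Anisotropic) : B.toQuadraticForm'.Anisotropic := by
  obtain ⟨U, hU, rfl⟩ := h
  intro v hv
  rw [toQuadraticForm'_mul_mul_transpose] at hv
  exact vecMul_injective_of_isUnit ((isUnit_iff_isUnit_det U).mpr hU) (by simpa using hA _ hv)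

end Congruence

section Primitive

variable {n : Type*} [Fintype n] [Nonempty n]

theorem exists_primitive_smul_eq (v : n → ℤ) :
    ∃ u : n → ℤ, Finset.univ.gcd u = 1 ∧ v = Finset.univ.gcd v • u := by
  obtain ⟨u, hu, hprim⟩ := Finset.extract_gcd v Finset.univ_nonempty
  exact ⟨u, hprim, funext fun i => hu i (Finset.mem_univ i)⟩

theorem exists_primitive_isotropic (Q : QuadraticMap ℤ (n → ℤ) ℤ) (hQ : ¬Q.Anisotropic) :
    ∃ u, Finset.univ.gcd u = 1 ∧ Q u = 0 := by
  obtain ⟨v, hv, hQv⟩ := (QuadraticMap.not_anisotropic_iff_exists Q).mp hQ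
  obtain ⟨u, hprim, hvu⟩ := exists_primitive_smul_eq v
  refine ⟨u, hprim, ?_⟩
  rw [hvu, QuadraticMap.map_smul, smul_eq_mul] at hQv
  refine (mul_eq_zero.mp hQv).resolve_left (mul_self_ne_zero.mpr fun hg => hv ?_)
  rw [hvu, hg, zero_smul]

theorem exists_primitive_isMin (Q : QuadraticMap ℤ (n → ℤ) ℤ) (hQ : ∃ v, Q v ≠ 0) :
    ∃ v, Finset.univ.gcd v = 1 ∧ Q v ≠ 0 ∧ ∀ w, Q w ≠ 0 → |Q v| ≤ |Q w| := by
  classical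
  obtain ⟨v₀, hv₀⟩ := hQ
  have hex : ∃ m, ∃ v, Q v ≠ 0 ∧ (Q v).natAbs = m := ⟨_, v₀, hv₀, rfl⟩
  obtain ⟨v, hv, hvm⟩ := Nat.find_spec hex
  obtain ⟨u, hprim, hvu⟩ := exists_primitive_smul_eq v
  have hQvu : Q v = (Finset.univ.gcd v * Finset.univ.gcd v) * Q u := by
    rw [← smul_eq_mul _ (Q u), ← QuadraticMap.map_smul, ← hvu]
  have hQu : Q u ≠ 0 := fun h => hv (by rw [hQvu, h, mul_zero])
  refine ⟨u, hprim, hQu, fun w hw => ?_⟩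
  calc |Q u| ≤ |Q v| := by
        rw [hQvu, abs_mul]
        exact le_mul_of_one_le_left (abs_nonneg _)
          (Int.one_le_abs (left_ne_zero_of_mul (hQvu ▸ hv)))
    _ ≤ |Q w| := by
        simp only [Int.abs_eq_natAbs, Nat.cast_le, hvm]
        exact Nat.find_min' hex ⟨w, hw, rfl⟩

theorem isCoprime_of_gcd_eq_one {a b : ℤ} (h : gcd a b = 1) : IsCoprime a b := by
  rwa [Int.isCoprime_iff_gcd_eq_one, ← Int.natCast_inj, Int.coe_gcd]

theorem gcd_fin_two (v : Fin 2 → ℤ) : Finset.univ.gcd v = gcd (v 0) (v 1) := by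
  simp [Fin.univ_succ, ← Int.abs_eq_normalize, ← Int.coe_gcd, Int.gcd, Int.natAbs_abs]

theorem gcd_fin_succ {m : ℕ} (v : Fin (m + 1) → ℤ) :
    Finset.univ.gcd v = gcd (v 0) (Finset.univ.gcd (Fin.tail v)) := by
  classical
  rw [Fin.univ_succ, Finset.gcd_cons, Finset.map_eq_image, Finset.gcd_image]
  rfl

theorem exists_isUnit_det_row_zero_eq_fin_two {v : Fin 2 → ℤ} (hv : Finset.univ.gcd v = 1) :
    ∃ U : Matrix (Fin 2) (Fin 2) ℤ, IsUnit U.det ∧ U 0 = v := by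
  obtain ⟨x, y, hxy⟩ := isCoprime_of_gcd_eq_one (gcd_fin_two v ▸ hv)
  refine ⟨!![v 0, v 1; -y, x], ?_, ?_⟩
  · rw [det_fin_two_of, Int.isUnit_iff]
    left; linear_combination hxy
  · ext i; fin_cases i <;> rfl

theorem exists_isUnit_det_row_zero_eq_fin_three {v : Fin 3 → ℤ} (hv : Finset.univ.gcd v = 1) :
    ∃ U : Matrix (Fin 3) (Fin 3) ℤ, IsUnit U.det ∧ U 0 = v := by
  obtain ⟨w, hwprim, htail⟩ := exists_primitive_smul_eq (Fin.tail v)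
  set g := Finset.univ.gcd (Fin.tail v)
  have hv1 : v 1 = g * w 0 := congr_fun htail 0
  have hv2 : v 2 = g * w 1 := congr_fun htail 1
  obtain ⟨p, q, hpq⟩ := isCoprime_of_gcd_eq_one (gcd_fin_succ v ▸ hv)
  obtain ⟨x, y, hxy⟩ := isCoprime_of_gcd_eq_one (gcd_fin_two w ▸ hwprim)
  -- its determinant is `-(p v₀ + q g) (x w₀ + y w₁) = -1`
  refine ⟨!![v 0, v 1, v 2; 0, -y, x; -q, p * w 0, p * w 1], ?_, ?_⟩
  · rw [det_fin_three, Int.isUnit_iff]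
    right
    simp only [Fin.isValue, of_apply, cons_val', cons_val_zero, cons_val_fin_one, cons_val_one,
      mul_neg, cons_val, neg_mul, mul_zero, zero_mul, sub_zero, add_zero, neg_neg, Int.reduceNeg]
    linear_combination (-y * q) * hv2 + (-x * q) * hv1 - (p * v 0 + q * g) * hxy - hpq
  · ext i; fin_cases i <;> rfl

end Primitive

theorem exists_two_mul_abs_add_mul_le (a b : ℤ) (hb : b ≠ 0) :
    ∃ k : ℤ, 2 * |a + k * b| ≤ |b| := by
  have hm : 0 < b.natAbs := Int.natAbs_pos.mpr hb
  have hlo := Int.le_bmod (x := a) hm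
  have hhi := Int.bmod_le (x := a) hm
  refine ⟨-Int.bdiv a b.natAbs * b.sign, ?_⟩
  rw [mul_assoc, Int.sign_mul_self, neg_mul, ← sub_eq_add_neg, ← Int.bmod_eq_self_sub_bdiv_mul,
    Int.abs_eq_natAbs b]
  rcases abs_cases (Int.bmod a b.natAbs) with ⟨h, -⟩ | ⟨h, -⟩ <;> omega

def IsReduced (d e f : ℤ) : Prop :=
  2 * |e| ≤ |d| ∧ ∀ x y : ℤ, d * x ^ 2 + 2 * e * x * y + f * y ^ 2 ≠ 0 →
    |d| ≤ |d * x ^ 2 + 2 * e * x * y + f * y ^ 2|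

theorem IsReduced.sq_le_four_mul_abs {d e f : ℤ} (h : IsReduced d e f)
    (hdet : d * f - e ^ 2 ≠ 0) : d ^ 2 ≤ 4 * |d * f - e ^ 2| := by
  obtain ⟨he, hmin⟩ := h
  have he2 : 4 * e ^ 2 ≤ d ^ 2 := by nlinarith [sq_abs e, sq_abs d, abs_nonneg e]
  rcases eq_or_ne f 0 with rfl | hf
  · -- the values `d ± 2e` at `(±1, 1)` are at least `|d|` but multiply to `d² - 4e²`
    rw [show |d * 0 - e ^ 2| = e ^ 2 by simp]
    by_contra! hlt
    have hplus : |d| ≤ |d + 2 * e| := by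
      simpa using hmin 1 1 fun h => hlt.ne' (by linear_combination (d - 2 * e) * h)
    have hminus : |d| ≤ |d - 2 * e| := by
      simpa [sub_eq_add_neg] using
        hmin (-1) 1 fun h => hlt.ne' (by linear_combination (d + 2 * e) * h)
    have hprod : d ^ 2 ≤ d ^ 2 - 4 * e ^ 2 := by
      have := mul_le_mul hplus hminus (abs_nonneg _) (abs_nonneg _)
      rwa [← abs_mul, ← abs_mul, abs_mul_self, abs_of_nonneg (by nlinarith), ← sq,
        show (d + 2 * e) * (d - 2 * e) = d ^ 2 - 4 * e ^ 2 by ring] at this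
    exact hdet (by nlinarith [sq_nonneg e])
  · have hfd : |d| ≤ |f| := by simpa using hmin 0 1 (by simpa using hf)
    have hdf : d ^ 2 ≤ |d * f| := by rw [abs_mul]; nlinarith [sq_abs d, abs_nonneg d]
    rcases abs_cases (d * f - e ^ 2) with ⟨h, h0⟩ | ⟨h, h0⟩ <;>
      rcases abs_cases (d * f) with ⟨h', h0'⟩ | ⟨h', h0'⟩ <;> nlinarith [sq_nonneg e]

theorem IsReduced.eq_of_det_eq_one {d e f : ℤ} (h : IsReduced d e f) (hd : d ≠ 0)
    (hdet : d * f - e ^ 2 = 1) : e = 0 ∧ (d = 1 ∧ f = 1 ∨ d = -1 ∧ f = -1) := by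
  obtain ⟨he, hmin⟩ := h
  have he2 : 4 * e ^ 2 ≤ d ^ 2 := by nlinarith [sq_abs e, sq_abs d, abs_nonneg e]
  have hf : f ≠ 0 := by rintro rfl; nlinarith [sq_nonneg e]
  have hfd : |d| ≤ |f| := by simpa using hmin 0 1 (by simpa using hf)
  have hdf : d ^ 2 ≤ d * f := by
    rw [← abs_of_pos (show 0 < d * f by nlinarith [sq_nonneg e]), abs_mul]
    nlinarith [sq_abs d, abs_nonneg d]
  have hd1 : d ^ 2 = 1 := by nlinarith [sq_pos_of_ne_zero hd]
  obtain rfl : e = 0 := by nlinarith [sq_nonneg e]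
  rcases sq_eq_one_iff.mp hd1 with rfl | rfl
  · exact ⟨rfl, .inl ⟨rfl, by linarith⟩⟩
  · exact ⟨rfl, .inr ⟨rfl, by linarith⟩⟩

theorem toQuadraticForm'_fin_two (d e f x y : ℤ) :
    (!![d, e; e, f] : Matrix (Fin 2) (Fin 2) ℤ).toQuadraticForm' ![x, y] =
      d * x ^ 2 + 2 * e * x * y + f * y ^ 2 := by
  simp only [toQuadraticForm'_apply, dotProduct, mulVec, of_apply, cons_val', cons_val_fin_one,
    Fin.sum_univ_two, Fin.isValue, cons_val_zero, cons_val_one]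
  ring

theorem eq_fin_two_of_isSymm {D : Matrix (Fin 2) (Fin 2) ℤ} (hD : D.IsSymm) :
    D = !![D 0 0, D 0 1; D 0 1, D 1 1] := by
  nth_rewrite 1 [eta_fin_two D]
  rw [hD.apply 0 1]

theorem shear_mul_mul_transpose (E : Matrix (Fin 2) (Fin 2) ℤ) (k : ℤ) :
    !![1, 0; k, 1] * E * !![1, 0; k, 1]ᵀ =
      !![E 0 0, E 0 1 + k * E 0 0;
        E 1 0 + k * E 0 0, E 1 1 + k * (E 0 1 + E 1 0) + k ^ 2 * E 0 0] := by
  ext i j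
  fin_cases i <;> fin_cases j <;> simp [mul_apply, vecMul, dotProduct, Fin.sum_univ_two] <;> ring

theorem exists_congruent_reduced {D : Matrix (Fin 2) (Fin 2) ℤ} (hD : D.IsSymm)
    (hQ : ∃ v, D.toQuadraticForm' v ≠ 0) :
    ∃ d e f : ℤ, Congruent D !![d, e; e, f] ∧ d ≠ 0 ∧ IsReduced d e f := by
  obtain ⟨v, hprim, hv, hmin⟩ := exists_primitive_isMin D.toQuadraticForm' hQ
  obtain ⟨U, hU, hU0⟩ := exists_isUnit_det_row_zero_eq_fin_two hprim
  have hE00 : (U * D * Uᵀ) 0 0 = D.toQuadraticForm' v := by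
    rw [mul_mul_transpose_apply_self, hU0]
  set E := U * D * Uᵀ
  have hDE : Congruent D E := ⟨U, hU, rfl⟩
  have hE10 : E 1 0 = E 0 1 := (hDE.isSymm hD).apply 0 1
  obtain ⟨k, hk⟩ := exists_two_mul_abs_add_mul_le (E 0 1) (E 0 0) (hE00 ▸ hv)
  have hDR : Congruent D !![E 0 0, E 0 1 + k * E 0 0; E 0 1 + k * E 0 0,
      E 1 1 + k * (E 0 1 + E 1 0) + k ^ 2 * E 0 0] :=
    hDE.trans ⟨!![1, 0; k, 1], by simp, by rw [shear_mul_mul_transpose, hE10]⟩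
  refine ⟨_, _, _, hDR, hE00 ▸ hv, hk, fun x y hxy => ?_⟩
  obtain ⟨w, hw⟩ := hDR.exists_toQuadraticForm'_eq ![x, y]
  rw [toQuadraticForm'_fin_two] at hw
  rw [hw] at hxy ⊢
  exact hE00 ▸ hmin w hxy

theorem exists_toQuadraticForm'_ne_zero_fin_two {D : Matrix (Fin 2) (Fin 2) ℤ} (hD : D.IsSymm)
    (hdet : D.det ≠ 0) : ∃ v, D.toQuadraticForm' v ≠ 0 := by
  by_contra! h
  have h10 := h ![1, 0]
  have h01 := h ![0, 1]
  have h11 := h ![1, 1]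
  rw [eq_fin_two_of_isSymm hD, toQuadraticForm'_fin_two] at h10 h01 h11
  rw [eq_fin_two_of_isSymm hD, det_fin_two_of] at hdet
  exact hdet (by nlinarith)

theorem exists_sq_le_four_mul_abs_det {D : Matrix (Fin 2) (Fin 2) ℤ} (hD : D.IsSymm)
    (hdet : D.det ≠ 0) :
    ∃ v, D.toQuadraticForm' v ≠ 0 ∧ D.toQuadraticForm' v ^ 2 ≤ 4 * |D.det| := by
  obtain ⟨d, e, f, hDR, hd, hred⟩ :=
    exists_congruent_reduced hD (exists_toQuadraticForm'_ne_zero_fin_two hD hdet)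
  obtain ⟨v, hv⟩ := hDR.exists_toQuadraticForm'_eq ![1, 0]
  have hdetR : D.det = d * f - e ^ 2 := by rw [← hDR.det_eq, det_fin_two_of, sq]
  rw [toQuadraticForm'_fin_two] at hv
  refine ⟨v, ?_, ?_⟩ <;> rw [← hv] <;> simp only [hdetR] at hdet ⊢
  · simpa using hd
  · simpa using hred.sq_le_four_mul_abs hdet

theorem congruent_one_or_congruent_neg_one {D : Matrix (Fin 2) (Fin 2) ℤ} (hD : D.IsSymm)
    (hdet : D.det = 1) : Congruent D 1 ∨ Congruent D (-1) := by
  obtain ⟨d, e, f, hDR, hd, hred⟩ :=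
    exists_congruent_reduced hD (exists_toQuadraticForm'_ne_zero_fin_two hD (by simp [hdet]))
  have hdetR : d * f - e ^ 2 = 1 := by rw [← hdet, ← hDR.det_eq, det_fin_two_of, sq]
  obtain ⟨rfl, ⟨rfl, rfl⟩ | ⟨rfl, rfl⟩⟩ := hred.eq_of_det_eq_one hd hdetR
  · exact .inl (by simpa [one_fin_two] using hDR)
  · exact .inr (by simpa [one_fin_two] using hDR)

theorem not_anisotropic_of_det_eq_neg_one {D : Matrix (Fin 2) (Fin 2) ℤ} (hD : D.IsSymm)
    (hdet : D.det = -1) : ¬D.toQuadraticForm'.Anisotropic := by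
  rw [QuadraticMap.not_anisotropic_iff_exists]
  rw [eq_fin_two_of_isSymm hD, det_fin_two_of] at hdet
  rw [eq_fin_two_of_isSymm hD]
  rcases eq_or_ne (D 0 0) 0 with h | h
  · refine ⟨![1, 0], by simp, ?_⟩
    rw [toQuadraticForm'_fin_two, h]
    ring
  · refine ⟨![1 - D 0 1, D 0 0], by simp [h], ?_⟩
    rw [toQuadraticForm'_fin_two]
    linear_combination D 0 0 * hdet

theorem exists_congruent_apply_zero_zero_eq (A : Matrix (Fin 3) (Fin 3) ℤ) {v : Fin 3 → ℤ}
    (hv : Finset.univ.gcd v = 1) : ∃ B, Congruent A B ∧ B 0 0 = A.toQuadraticForm' v := by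
  obtain ⟨U, hU, hU0⟩ := exists_isUnit_det_row_zero_eq_fin_three hv
  exact ⟨_, ⟨U, hU, rfl⟩, by rw [mul_mul_transpose_apply_self, hU0]⟩

def diagBlock (a : ℤ) (C : Matrix (Fin 2) (Fin 2) ℤ) : Matrix (Fin 3) (Fin 3) ℤ :=
  !![a, 0, 0; 0, C 0 0, C 0 1; 0, C 1 0, C 1 1]

theorem det_diagBlock (a : ℤ) (C : Matrix (Fin 2) (Fin 2) ℤ) :
    (diagBlock a C).det = a * C.det := by
  simp only [diagBlock, Fin.isValue, det_fin_three, of_apply, cons_val', cons_val_zero,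
    cons_val_fin_one, cons_val_one, cons_val, mul_zero, zero_mul, sub_zero, add_zero, det_fin_two]
  ring

theorem toQuadraticForm'_diagBlock (a : ℤ) (C : Matrix (Fin 2) (Fin 2) ℤ) (x y z : ℤ) :
    (diagBlock a C).toQuadraticForm' ![x, y, z] = a * x ^ 2 + C.toQuadraticForm' ![y, z] := by
  simp only [diagBlock, Fin.isValue, toQuadraticForm'_apply, dotProduct, mulVec, of_apply,
    cons_val', cons_val_fin_one, Fin.sum_univ_three, cons_val_zero, cons_val_one, cons_val,
    zero_mul, add_zero, zero_add, Fin.sum_univ_two]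
  ring

theorem congruent_diagBlock_diagBlock {C E : Matrix (Fin 2) (Fin 2) ℤ} (a : ℤ)
    (h : Congruent C E) :
    Congruent (diagBlock a C) (diagBlock a E) := by
  obtain ⟨W, hW, rfl⟩ := h
  refine ⟨diagBlock 1 W, by rwa [det_diagBlock, one_mul], ?_⟩
  ext i j
  fin_cases i <;> fin_cases j <;>
    simp [diagBlock, mul_apply, Fin.sum_univ_three, Fin.sum_univ_two]

theorem congruent_diagBlock {B : Matrix (Fin 3) (Fin 3) ℤ} (hB : B.IsSymm)
    (hunit : B 0 0 * B 0 0 = 1) :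
    ∃ C : Matrix (Fin 2) (Fin 2) ℤ, C.IsSymm ∧ Congruent B (diagBlock (B 0 0) C) := by
  set a := B 0 0
  set p := B 0 1
  set q := B 0 2
  refine ⟨!![B 1 1 - a * p ^ 2, B 1 2 - a * p * q; B 1 2 - a * p * q, B 2 2 - a * q ^ 2],
    ?_, !![1, 0, 0; -(a * p), 1, 0; -(a * q), 0, 1], by simp [det_fin_three], ?_⟩
  · ext i j
    fin_cases i <;> fin_cases j <;> rfl
  · have h10 := hB.apply 0 1
    have h20 := hB.apply 0 2
    have h21 := hB.apply 1 2
    ext i j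
    fin_cases i <;> fin_cases j <;>
      simp [diagBlock, mul_apply, vecMul, dotProduct, Fin.sum_univ_three, h10, h20, h21] <;> grind

def scaledSchur (B : Matrix (Fin 3) (Fin 3) ℤ) : Matrix (Fin 2) (Fin 2) ℤ :=
  !![B 0 0 * B 1 1 - B 0 1 ^ 2, B 0 0 * B 1 2 - B 0 1 * B 0 2;
    B 0 0 * B 1 2 - B 0 1 * B 0 2, B 0 0 * B 2 2 - B 0 2 ^ 2]

theorem scaledSchur_isSymm (B : Matrix (Fin 3) (Fin 3) ℤ) : (scaledSchur B).IsSymm := by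
  ext i j
  fin_cases i <;> fin_cases j <;> rfl

theorem det_scaledSchur {B : Matrix (Fin 3) (Fin 3) ℤ} (hB : B.IsSymm) :
    (scaledSchur B).det = B 0 0 * B.det := by
  rw [scaledSchur, det_fin_two_of, det_fin_three, hB.apply 0 1, hB.apply 0 2, hB.apply 1 2]
  ring

theorem mul_toQuadraticForm'_eq_sq_add_scaledSchur {B : Matrix (Fin 3) (Fin 3) ℤ} (hB : B.IsSymm)
    (x y z : ℤ) :
    B 0 0 * B.toQuadraticForm' ![x, y, z] =
      (B 0 0 * x + B 0 1 * y + B 0 2 * z) ^ 2 + (scaledSchur B).toQuadraticForm' ![y, z] := by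
  rw [scaledSchur, toQuadraticForm'_fin_two]
  simp only [Fin.isValue, toQuadraticForm'_apply, dotProduct, mulVec, Fin.sum_univ_three,
    cons_val_zero, cons_val_one, cons_val, hB.apply 0 1, hB.apply 0 2, hB.apply 1 2]
  ring

theorem abs_eq_one_of_mul_eq_sq_add {a s d c : ℤ} (ha : a ≠ 0) (hc : |a| ≤ |c|)
    (hs : 2 * |s| ≤ |a|) (hd : d ^ 2 ≤ 4 * |a|) (h : a * c = s ^ 2 + d) : |a| = 1 := by
  have hm : 1 ≤ |a| := Int.one_le_abs ha
  have h1 : |a| * |a| ≤ s ^ 2 + |d| :=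
    calc |a| * |a| ≤ |a * c| := by rw [abs_mul]; exact mul_le_mul_of_nonneg_left hc (abs_nonneg a)
      _ = |s ^ 2 + d| := by rw [h]
      _ ≤ s ^ 2 + |d| := (abs_add_le _ _).trans_eq (by rw [abs_sq])
  have h2 : 4 * s ^ 2 ≤ |a| ^ 2 := by nlinarith [sq_abs s, abs_nonneg s]
  have h3 : 3 * |a| ^ 2 ≤ 4 * |d| := by nlinarith
  have h4 : 9 * |a| ^ 4 ≤ 64 * |a| := by nlinarith [sq_abs d, abs_nonneg d]
  by_contra hne
  have h5 : 2 ≤ |a| := by omega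
  nlinarith [pow_le_pow_left₀ (by norm_num) h5 3]

theorem abs_apply_zero_zero_eq_one {B : Matrix (Fin 3) (Fin 3) ℤ} (hB : B.IsSymm)
    (hdet : B.det = 1) (hani : B.toQuadraticForm'.Anisotropic)
    (hmin : ∀ w, B.toQuadraticForm' w ≠ 0 → |B 0 0| ≤ |B.toQuadraticForm' w|) :
    |B 0 0| = 1 := by
  have ha : B 0 0 ≠ 0 := fun h => by
    simpa using hani (Pi.single 0 1) (by rw [toQuadraticForm'_single, h])
  obtain ⟨w, hw, hw4⟩ := exists_sq_le_four_mul_abs_det (scaledSchur_isSymm B)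
    (by rw [det_scaledSchur hB, hdet, mul_one]; exact ha)
  rw [det_scaledSchur hB, hdet, mul_one] at hw4
  obtain ⟨y, z, rfl⟩ : ∃ y z, w = ![y, z] := ⟨w 0, w 1, (FinVec.etaExpand_eq w).symm⟩
  obtain ⟨k, hk⟩ := exists_two_mul_abs_add_mul_le (B 0 1 * y + B 0 2 * z) (B 0 0) ha
  have hu : B.toQuadraticForm' ![k, y, z] ≠ 0 := fun h => hw (by
    obtain ⟨-, rfl, rfl⟩ : k = 0 ∧ y = 0 ∧ z = 0 := by simpa using hani _ h
    simp [toQuadraticForm'_apply])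
  exact abs_eq_one_of_mul_eq_sq_add ha (hmin _ hu) (by convert hk using 3; ring) hw4
    (mul_toQuadraticForm'_eq_sq_add_scaledSchur hB k y z)

theorem anisotropic_of_diagBlock {a : ℤ} {C : Matrix (Fin 2) (Fin 2) ℤ}
    (hani : (diagBlock a C).toQuadraticForm'.Anisotropic) : C.toQuadraticForm'.Anisotropic := by
  intro w hw
  obtain ⟨y, z, rfl⟩ : ∃ y z, w = ![y, z] := ⟨w 0, w 1, (FinVec.etaExpand_eq w).symm⟩
  have h0 := hani ![0, y, z] (by rw [toQuadraticForm'_diagBlock, hw]; ring)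
  simpa using h0

theorem congruent_one_of_diagBlock {a : ℤ} {C : Matrix (Fin 2) (Fin 2) ℤ} (hC : C.IsSymm)
    (hdet : (diagBlock a C).det = 1) (hani : (diagBlock a C).toQuadraticForm'.Anisotropic) :
    Congruent (diagBlock a C) 1 := by
  rw [det_diagBlock] at hdet
  rcases Int.eq_one_or_neg_one_of_mul_eq_one hdet with rfl | rfl
  · rcases congruent_one_or_congruent_neg_one hC (by linarith) with h | h
    · have hone : diagBlock 1 (1 : Matrix (Fin 2) (Fin 2) ℤ) = 1 := by
        ext i j; fin_cases i <;> fin_cases j <;> rfl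
      exact hone ▸ congruent_diagBlock_diagBlock 1 h
    · have := (congruent_diagBlock_diagBlock 1 h).anisotropic hani ![1, 1, 0]
        (by rw [toQuadraticForm'_diagBlock]; simp [toQuadraticForm'_apply])
      simp at this
  · exact absurd (anisotropic_of_diagBlock hani)
      (not_anisotropic_of_det_eq_neg_one hC (by linarith))

theorem congruent_one_of_anisotropic {A : Matrix (Fin 3) (Fin 3) ℤ} (hA : A.IsSymm)
    (hdet : A.det = 1) (hani : A.toQuadraticForm'.Anisotropic) : Congruent A 1 := by
  obtain ⟨v, hprim, -, hmin⟩ := exists_primitive_isMin A.toQuadraticForm'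
    ⟨Pi.single 0 1, fun h => by simpa using hani _ h⟩
  obtain ⟨B, hAB, hB00⟩ := exists_congruent_apply_zero_zero_eq A hprim
  have hone : |B 0 0| = 1 :=
    abs_apply_zero_zero_eq_one (hAB.isSymm hA) (by rw [hAB.det_eq, hdet]) (hAB.anisotropic hani)
      fun w hw => by
        obtain ⟨u, hu⟩ := hAB.exists_toQuadraticForm'_eq w
        rw [hu] at hw ⊢
        exact hB00 ▸ hmin u hw
  obtain ⟨C, hC, hBC⟩ :=
    congruent_diagBlock (hAB.isSymm hA) (by rw [← abs_mul_abs_self, hone, one_mul])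
  have hAC := hAB.trans hBC
  exact hAC.trans (congruent_one_of_diagBlock hC (by rw [hAC.det_eq, hdet])
    (hAC.anisotropic hani))

theorem exists_congruent_hyperbolic_corner {B : Matrix (Fin 3) (Fin 3) ℤ} (hB : B.IsSymm)
    (hdet : B.det = 1) (h00 : B 0 0 = 0) :
    ∃ B', Congruent B B' ∧ B' 0 0 = 0 ∧ B' 0 1 = 1 ∧ B' 0 2 = 0 := by
  have h10 := hB.apply 0 1
  have h20 := hB.apply 0 2
  set p := B 0 1
  set q := B 0 2
  set x := 2 * q * B 1 2 - p * B 2 2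
  set y := -q * B 1 1
  -- expanding `det B = 1` with `B 0 0 = 0` is a Bézout relation for `p` and `q`
  have hpq : p * x + q * y = 1 := by
    rw [← hdet, det_fin_three, h00, h10, h20, hB.apply 1 2]
    ring
  refine ⟨_, ⟨!![1, 0, 0; 0, x, y; 0, -q, p], ?_, rfl⟩, ?_, ?_, ?_⟩
  · rw [det_fin_three, Int.isUnit_iff]
    left
    simp only [Fin.isValue, of_apply, cons_val', cons_val_zero, cons_val_fin_one, cons_val_one,
      one_mul, cons_val, mul_neg, sub_neg_eq_add, mul_zero, zero_mul, sub_zero, add_zero, neg_zero]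
    linear_combination hpq
  all_goals simp [mul_apply, vecMul, dotProduct, Fin.sum_univ_three, h00]
  · linear_combination hpq
  · ring

theorem congruent_of_hyperbolic_corner {B : Matrix (Fin 3) (Fin 3) ℤ} (hB : B.IsSymm)
    (hdet : B.det = 1) (h00 : B 0 0 = 0) (h01 : B 0 1 = 1) (h02 : B 0 2 = 0) :
    Congruent B !![0, 1, 0; 1, B 1 1 % 2, 0; 0, 0, -1] := by
  have h10 := hB.apply 0 1
  have h20 := hB.apply 0 2
  have h21 := hB.apply 1 2
  have h22 : B 2 2 = -1 := by
    rw [det_fin_three, h10, h20, h00, h01, h02] at hdet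
    linarith
  refine ⟨!![1, 0, 0; -(B 1 1 / 2), 1, 0; -B 1 2, 0, 1], by simp [det_fin_three], ?_⟩
  ext i j
  fin_cases i <;> fin_cases j <;>
    simp [mul_apply, vecMul, dotProduct, Fin.sum_univ_three, h00, h01, h02, h10, h20, h21, h22]
  omega

theorem congruent_of_mul_self_eq {ε : ℤ} (hε : ε * ε = ε) :
    Congruent !![0, 1, 0; 1, ε, 0; 0, 0, -1] !![0, 0, 1; 0, -1, 0; 1, 0, 0] := by
  refine ⟨!![1, 0, 0; ε, 0, 1; 0, 1, ε], by simp [det_fin_three], ?_⟩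
  ext i j
  fin_cases i <;> fin_cases j <;> simp [mul_apply, Fin.sum_univ_three, hε]

theorem congruent_of_not_anisotropic {A : Matrix (Fin 3) (Fin 3) ℤ} (hA : A.IsSymm)
    (hdet : A.det = 1) (hiso : ¬A.toQuadraticForm'.Anisotropic) :
    Congruent A !![0, 0, 1; 0, -1, 0; 1, 0, 0] := by
  obtain ⟨u, hprim, hu⟩ := exists_primitive_isotropic A.toQuadraticForm' hiso
  obtain ⟨B₀, hAB₀, hB₀⟩ := exists_congruent_apply_zero_zero_eq A hprim
  obtain ⟨B, hB₀B, h00, h01, h02⟩ :=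
    exists_congruent_hyperbolic_corner (hAB₀.isSymm hA) (by rw [hAB₀.det_eq, hdet])
      (hu ▸ hB₀)
  have hAB := hAB₀.trans hB₀B
  refine hAB.trans ((congruent_of_hyperbolic_corner (hAB.isSymm hA) (by rw [hAB.det_eq, hdet])
    h00 h01 h02).trans (congruent_of_mul_self_eq ?_))
  rcases Int.emod_two_eq (B 1 1) with h | h <;> simp [h]

end UnimodularTernary

open UnimodularTernary in
/-- Every integer symmetric `3 × 3` matrix `A` with `det A = 1` is
`GL₃(ℤ)`-congruent (`A ↦ U * A * Uᵀ`) either to `[[0,0,1],[0,-1,0],[1,0,0]]` or to the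
identity matrix. -/
theorem stmt_4
    (A : Matrix (Fin 3) (Fin 3) ℤ) (hsymm : A.IsSymm) (hdet : A.det = 1) :
    ∃ U : Matrix (Fin 3) (Fin 3) ℤ, IsUnit U.det ∧
      (U * A * U.transpose = !![0, 0, 1; 0, -1, 0; 1, 0, 0] ∨
        U * A * U.transpose = 1) := by
  by_cases hani : A.toQuadraticForm'.Anisotropic
  · obtain ⟨U, hU, hUA⟩ := congruent_one_of_anisotropic hsymm hdet hani
    exact ⟨U, hU, .inr hUA⟩
  · obtain ⟨U, hU, hUA⟩ := congruent_of_not_anisotropic hsymm hdet hani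
    exact ⟨U, hU, .inl hUA⟩
end

section
/- Let H be a finite elementary abelian 2-group and ε : H → {±1} a quadratic form whose associated bilinear form ⟨α,β⟩ = ε(1)ε(α)ε(β)ε(αβ) is a nondegenerate symplectic pairing on H. Let W ⊆ H be a coisotropic subgroup (i.e. W^⊥ is isotropic). Then there is exactly one coset αW of W in H on which the sum Σ_{δ ∈ αW} ε(δ) is nonzero, and on that coset the sum equals ±√|H| with a sign depending only on ε. -/
/-!
Write `⟨a, b⟩` for the pairing, `S = ∑_{x ∈ H} ε(x)` and `c(α) = ∑_{w ∈ W} ε(αw)`.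
Since `ε(a)ε(b) = ε(1)ε(ab)⟨a, ab⟩` and `⟨·, z⟩` is a character, `c(α)c(β)` is a sum over `u ∈ W`
of multiples of the character sums `∑_{w ∈ W} ⟨w, αβu⟩`, which vanish unless `αβu ∈ W^⊥ ⊆ W`.
Hence `c(α)c(β) = 0` unless `αβ ∈ W`: `c` is supported on a single coset, on which it is constant,
and comparing with `∑_α c(α) = |W| S` shows that it equals `S` there. The same expansion for
`W = H`, where nondegeneracy kills every character sum but the one at `z = 1`, gives `S² = |H|`.
-/

section CharmedCoset

variable {H : Type*} [CommGroup H] {ε : H → ℤ}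

def pairing (ε : H → ℤ) (a b : H) : ℤ := ε 1 * ε a * ε b * ε (a * b)

def cosetSum (ε : H → ℤ) (W : Subgroup H) [Fintype W] (α : H) : ℤ := ∑ w : W, ε (α * w)

lemma pairing_comm (a b : H) : pairing ε a b = pairing ε b a := by
  simp only [pairing, mul_comm b a]; ring

lemma pairing_one_left (hε : ∀ x, ε x = 1 ∨ ε x = -1) (b : H) : pairing ε 1 b = 1 := by
  have hsq x : ε x * ε x = 1 := Int.isUnit_mul_self (Int.isUnit_iff.mpr (hε x))
  simp only [pairing, one_mul]
  linear_combination (ε b * ε b) * hsq 1 + hsq b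

def pairingHom (hε : ∀ x, ε x = 1 ∨ ε x = -1)
    (hB : ∀ a b c : H, pairing ε (a * b) c = pairing ε a c * pairing ε b c) (c : H) : H →* ℤ where
  toFun a := pairing ε a c
  map_one' := pairing_one_left hε c
  map_mul' a b := hB a b c

lemma sum_pairing_eq_zero (hε : ∀ x, ε x = 1 ∨ ε x = -1)
    (hB : ∀ a b c : H, pairing ε (a * b) c = pairing ε a c * pairing ε b c)
    (W : Subgroup H) [Fintype W] {c : H} (hc : ∃ w ∈ W, pairing ε w c ≠ 1) :
    ∑ w : W, pairing ε w c = 0 := by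
  obtain ⟨w, hw, hwc⟩ := hc
  refine sum_hom_units_eq_zero ((pairingHom hε hB c).comp W.subtype) fun h => hwc ?_
  exact DFunLike.congr_fun h ⟨w, hw⟩

lemma mul_eq_pairing (hε : ∀ x, ε x = 1 ∨ ε x = -1) (htwo : ∀ x : H, x * x = 1) (a b : H) :
    ε a * ε b = ε 1 * ε (a * b) * pairing ε a (a * b) := by
  have hsq x : ε x * ε x = 1 := Int.isUnit_mul_self (Int.isUnit_iff.mpr (hε x))
  have hb : a * (a * b) = b := by rw [← mul_assoc, htwo, one_mul]
  simp only [pairing, hb]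
  linear_combination (-(ε a * ε b)) * (hsq 1 * ε (a * b) * ε (a * b) + hsq (a * b))

lemma cosetSum_mul_cosetSum (hε : ∀ x, ε x = 1 ∨ ε x = -1)
    (hB : ∀ a b c : H, pairing ε (a * b) c = pairing ε a c * pairing ε b c)
    (htwo : ∀ x : H, x * x = 1) (W : Subgroup H) [Fintype W] (α β : H) :
    cosetSum ε W α * cosetSum ε W β = ∑ u : W,
      ε 1 * ε (α * β * u) * pairing ε α (α * β * u) * ∑ w : W, pairing ε w (α * β * u) := by
  have hreindex (w : W) : ∑ v : W, ε (α * w) * ε (β * v)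
      = ∑ u : W, ε (α * w) * ε (β * ↑(w * u)) :=
    (Fintype.sum_equiv (Equiv.mulLeft w) _ _ fun _ => rfl).symm
  have hterm (w u : W) : ε (α * w) * ε (β * ↑(w * u))
      = ε 1 * ε (α * β * u) * pairing ε α (α * β * u) * pairing ε w (α * β * u) := by
    have hprod : α * w * (β * ↑(w * u)) = α * β * u := by
      rw [Subgroup.coe_mul, mul_mul_mul_comm, mul_left_comm (w : H), ← mul_assoc (w : H),
        htwo, one_mul, mul_assoc]
    rw [mul_eq_pairing hε htwo, hprod, hB]
    ring
  rw [cosetSum, cosetSum, Finset.sum_mul_sum]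
  simp only [hreindex, hterm, Finset.mul_sum]
  exact Finset.sum_comm

lemma sum_mul_self_eq_card [Fintype H] (hε : ∀ x, ε x = 1 ∨ ε x = -1)
    (hB : ∀ a b c : H, pairing ε (a * b) c = pairing ε a c * pairing ε b c)
    (htwo : ∀ x : H, x * x = 1) (hnd : ∀ a : H, (∀ b : H, pairing ε a b = 1) → a = 1) :
    (∑ x, ε x) * (∑ x, ε x) = Fintype.card H := by
  classical
  have htop : cosetSum ε ⊤ 1 = ∑ x, ε x :=
    Fintype.sum_equiv Subgroup.topEquiv.toEquiv _ _ fun _ => by rw [one_mul]; rfl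
  have hoff (u : (⊤ : Subgroup H)) (hu : u ≠ 1) : ∑ w : (⊤ : Subgroup H), pairing ε w u = 0 := by
    refine sum_pairing_eq_zero hε hB ⊤ ?_
    by_contra! h
    exact hu (Subtype.ext (hnd u fun b => by rw [pairing_comm]; exact h b trivial))
  have hone (w : H) : pairing ε w 1 = 1 := by rw [pairing_comm, pairing_one_left hε]
  rw [← htop, cosetSum_mul_cosetSum hε hB htwo, Fintype.sum_eq_single 1 fun u hu => by
    rw [one_mul, one_mul, hoff u hu, mul_zero]]
  simp only [one_mul, Subgroup.coe_one, hone, Finset.sum_const,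
    Finset.card_univ, Fintype.card_congr Subgroup.topEquiv.toEquiv]
  linear_combination (Fintype.card H : ℤ) * Int.isUnit_mul_self (Int.isUnit_iff.mpr (hε 1))

def IsCoisotropic (ε : H → ℤ) (W : Subgroup H) : Prop :=
  ∀ b : H, (∀ w ∈ W, pairing ε w b = 1) → b ∈ W

lemma cosetSum_mul_eq_zero (hε : ∀ x, ε x = 1 ∨ ε x = -1)
    (hB : ∀ a b c : H, pairing ε (a * b) c = pairing ε a c * pairing ε b c)
    (htwo : ∀ x : H, x * x = 1) {W : Subgroup H} [Fintype W] (hW : IsCoisotropic ε W)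
    {α β : H} (hαβ : α * β ∉ W) : cosetSum ε W α * cosetSum ε W β = 0 := by
  rw [cosetSum_mul_cosetSum hε hB htwo]
  refine Finset.sum_eq_zero fun u _ => ?_
  have hu : α * β * u ∉ W := fun h => hαβ (by simpa using W.mul_mem h (W.inv_mem u.2))
  rw [sum_pairing_eq_zero hε hB W (by by_contra! h; exact hu (hW _ h)), mul_zero]

lemma cosetSum_mul_right (W : Subgroup H) [Fintype W] (α : H) {w : H} (hw : w ∈ W) :
    cosetSum ε W (α * w) = cosetSum ε W α :=
  Fintype.sum_equiv (Equiv.mulLeft ⟨w, hw⟩) _ _ fun _ => by simp [mul_assoc]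

lemma sum_cosetSum [Fintype H] (W : Subgroup H) [Fintype W] :
    ∑ α, cosetSum ε W α = Fintype.card W * ∑ x, ε x := by
  have htranslate (w : W) : ∑ α, ε (α * w) = ∑ x, ε x :=
    Fintype.sum_equiv (Equiv.mulRight (w : H)) _ _ fun _ => rfl
  simp only [cosetSum]
  rw [Finset.sum_comm]
  simp only [htranslate, Finset.sum_const, Finset.card_univ, nsmul_eq_mul]

lemma cosetSum_eq_sum_of_ne_zero [Fintype H] (hε : ∀ x, ε x = 1 ∨ ε x = -1)
    (hB : ∀ a b c : H, pairing ε (a * b) c = pairing ε a c * pairing ε b c)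
    (htwo : ∀ x : H, x * x = 1) {W : Subgroup H} [Fintype W] (hW : IsCoisotropic ε W)
    {α₀ : H} (h₀ : cosetSum ε W α₀ ≠ 0) : cosetSum ε W α₀ = ∑ x, ε x := by
  classical
  have hshift (a : H) : cosetSum ε W (a * α₀) = if a ∈ W then cosetSum ε W α₀ else 0 := by
    split_ifs with ha
    · rw [mul_comm, cosetSum_mul_right W α₀ ha]
    · have : a * α₀ * α₀ ∉ W := by rwa [mul_assoc, htwo, mul_one]
      exact (mul_eq_zero.mp (cosetSum_mul_eq_zero hε hB htwo hW this)).resolve_right h₀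
  have hsum : ∑ a, cosetSum ε W a = Fintype.card W * cosetSum ε W α₀ := by
    rw [← Fintype.sum_equiv (Equiv.mulRight α₀) (fun a => cosetSum ε W (a * α₀)) _ fun _ => rfl]
    simp [hshift, Finset.sum_ite, Fintype.card_subtype]
  have hW0 : (Fintype.card W : ℤ) ≠ 0 := Nat.cast_ne_zero.mpr Fintype.card_ne_zero
  exact mul_left_cancel₀ hW0 (hsum.symm.trans (sum_cosetSum W))

end CharmedCoset

open Classical in
/-- **the charmed coset lemma.** Let `H` be a finite elementary abelian 2-group
and `ε : H → {±1}` a quadratic form whose associated bilinear form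
`⟨α,β⟩ = ε(1)ε(α)ε(β)ε(αβ)` is a nondegenerate symplectic pairing on `H`.  Let `W ⊆ H` be a
coisotropic subgroup (`W ⊇ W^⊥`).  Then there is exactly one coset `αW` of `W` on which
`∑_{δ ∈ αW} ε(δ)` is nonzero, and on that coset the sum equals `± √|H|` with a sign depending
only on `ε` (not on `W`). -/
theorem stmt_7
    (H : Type*) [CommGroup H] [Fintype H]
    (htwo : ∀ x : H, x * x = 1)
    (ε : H → ℤ) (hval : ∀ x, ε x = 1 ∨ ε x = -1)
    (hbil : ∀ α β γ : H,
      ε 1 * ε (α * β) * ε γ * ε (α * β * γ)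
        = (ε 1 * ε α * ε γ * ε (α * γ)) * (ε 1 * ε β * ε γ * ε (β * γ)))
    (hnd : ∀ α : H, (∀ β : H, ε 1 * ε α * ε β * ε (α * β) = 1) → α = 1) :
    ∃ s : ℤ, (s = 1 ∨ s = -1) ∧
      ∀ W : Subgroup H,
        (∀ β : H, (∀ w ∈ W, ε 1 * ε w * ε β * ε (w * β) = 1) → β ∈ W) →
        ∃ α : H,
          (∃ r : ℕ, r ^ 2 = Fintype.card H ∧ (∑ w : W, ε (α * (w : H))) = s * r) ∧
          ∀ β : H, (∑ w : W, ε (β * (w : H))) ≠ 0 → β⁻¹ * α ∈ W := by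
  set S := ∑ x, ε x
  have hS : S * S = Fintype.card H := sum_mul_self_eq_card hval hbil htwo hnd
  have hS0 : S ≠ 0 := fun h => Fintype.card_ne_zero (α := H) (by simpa [h] using hS.symm)
  refine ⟨S.sign, (Int.sign_trichotomy S).imp_right
    fun h => h.resolve_left (mt Int.sign_eq_zero_iff_zero.mp hS0), fun W hW => ?_⟩
  obtain ⟨α, -, hα⟩ := Finset.exists_ne_zero_of_sum_ne_zero (f := cosetSum ε W) <| by
    rw [sum_cosetSum]
    exact mul_ne_zero (Nat.cast_ne_zero.mpr Fintype.card_ne_zero) hS0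
  refine ⟨α, ⟨S.natAbs, by exact_mod_cast (Int.natAbs_sq S).trans (sq S ▸ hS), ?_⟩,
    fun β hβ => ?_⟩
  · rw [Int.sign_mul_natAbs]
    exact cosetSum_eq_sum_of_ne_zero hval hbil htwo hW hα
  · rw [inv_eq_of_mul_eq_one_right (htwo β)]
    by_contra hβα
    exact mul_ne_zero hβ hα (cosetSum_mul_eq_zero hval hbil htwo hW hβα)
end

section
/- With H, ε, W as in the charmed coset lemma, let αW be the unique coset on which Σ ε is nonzero. Then for any coset βW^⊥ of W^⊥ contained in αW, ε is constant on βW^⊥; whereas on any coset βW^⊥ not contained in αW, ε takes the values +1 and −1 equally often. -/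
/-!
The polar form `B a b = ε 1 ε a ε b ε (a b)` is a symmetric nondegenerate pairing into `±1`, so
`W^⊥⊥ = W` by counting (`|K^⊥| |K| = |H|`). For `γ ∈ W^⊥ ⊆ W`, translating the charmed sum by `γ`
multiplies it by `ε 1 ε γ B(α₀, γ)`; as the sum is nonzero, `ε γ = ε 1 B(α₀, γ)` and hence
`ε (β γ) = ε β · B(β⁻¹ α₀, γ)` on `W^⊥`. If `β⁻¹ α₀ ∈ W` this character of `W^⊥` is trivial;
otherwise `β⁻¹ α₀ ∉ W^⊥⊥`, the character is nontrivial, and its values sum to zero.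
-/

open Finset

section Orthogonal

variable {G : Type*} [CommGroup G]

def orthogonal (B : G →* G →* ℤ) (K : Subgroup G) : Subgroup G where
  carrier := {γ | ∀ w ∈ K, B w γ = 1}
  mul_mem' {a b} ha hb w hw := by rw [map_mul, ha w hw, hb w hw, one_mul]
  one_mem' w _ := map_one (B w)
  inv_mem' {a} ha w hw := calc
    B w a⁻¹ = B w a⁻¹ * B w a := by rw [ha w hw, mul_one]
    _ = 1 := by rw [← map_mul, inv_mul_cancel, map_one]

variable {B : G →* G →* ℤ}

theorem mem_orthogonal {K : Subgroup G} {γ : G} :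
    γ ∈ orthogonal B K ↔ ∀ w ∈ K, B w γ = 1 :=
  Iff.rfl

theorem le_orthogonal_orthogonal (hB : ∀ a b, B a b = B b a) (K : Subgroup G) :
    K ≤ orthogonal B (orthogonal B K) :=
  fun w hw γ hγ => by rw [hB]; exact hγ w hw

variable [Fintype G]

theorem card_orthogonal_mul_card (hB : ∀ a b, B a b = B b a)
    (hnd : ∀ a, (∀ b, B a b = 1) → a = 1) (K : Subgroup G) :
    Nat.card (orthogonal B K) * Nat.card K = Nat.card G := by
  classical
  have hrow (a : G) :
      ∑ k : K, B a k = if a ∈ orthogonal B K then (Nat.card K : ℤ) else 0 := by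
    have hiff : (B a).comp K.subtype = 1 ↔ a ∈ orthogonal B K := by
      simp only [MonoidHom.ext_iff, MonoidHom.comp_apply, Subgroup.coe_subtype,
        MonoidHom.one_apply, Subtype.forall, mem_orthogonal, hB a]
    simpa only [hiff, Nat.card_eq_fintype_card, Nat.cast_ite, Nat.cast_zero,
      MonoidHom.comp_apply, Subgroup.coe_subtype] using sum_hom_units ((B a).comp K.subtype)
  have hcol (k : K) : ∑ a : G, B a k = if k = 1 then (Nat.card G : ℤ) else 0 := by
    have hiff : B k = 1 ↔ k = 1 := by
      refine ⟨fun h => Subtype.ext (hnd k fun b => by rw [h]; rfl), fun h => ?_⟩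
      rw [h, OneMemClass.coe_one, map_one]
    simp only [hB _ (k : G)]
    simpa only [hiff, Nat.card_eq_fintype_card, Nat.cast_ite, Nat.cast_zero] using
      sum_hom_units (B k)
  have : ((Nat.card (orthogonal B K) * Nat.card K : ℕ) : ℤ) = Nat.card G := calc
    _ = ∑ a : G, ∑ k : K, B a k := by
      simp only [hrow, sum_ite, sum_const, nsmul_eq_mul, mul_zero, add_zero, Nat.cast_mul,
        Nat.card_eq_fintype_card, Fintype.card_subtype]
    _ = ∑ k : K, ∑ a : G, B a k := sum_comm
    _ = Nat.card G := by simp only [hcol, sum_ite_eq', mem_univ, if_true]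
  exact_mod_cast this

theorem orthogonal_orthogonal (hB : ∀ a b, B a b = B b a)
    (hnd : ∀ a, (∀ b, B a b = 1) → a = 1) (K : Subgroup G) :
    orthogonal B (orthogonal B K) = K := by
  have hpos : 0 < Nat.card (orthogonal B K) := Nat.card_pos
  have hK := card_orthogonal_mul_card hB hnd K
  have hK' := card_orthogonal_mul_card hB hnd (orthogonal B K)
  refine (Subgroup.eq_of_le_of_card_ge (le_orthogonal_orthogonal hB K) ?_).symm
  rw [mul_comm, ← hK] at hK'
  exact (Nat.eq_of_mul_eq_mul_left hpos hK').le

open Classical in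
theorem sum_orthogonal_eq_zero (hB : ∀ a b, B a b = B b a)
    (hnd : ∀ a, (∀ b, B a b = 1) → a = 1) {K : Subgroup G} {x : G} (hx : x ∉ K) :
    ∑ γ : orthogonal B K, B x γ = 0 := by
  refine sum_hom_units_eq_zero ((B x).comp (orthogonal B K).subtype) fun h => hx ?_
  rw [← orthogonal_orthogonal hB hnd K]
  intro γ hγ
  rw [hB]
  exact DFunLike.congr_fun h ⟨γ, hγ⟩

end Orthogonal

theorem two_mul_card_filter_eq_one {ι : Type*} (s : Finset ι) (f : ι → ℤ)
    (hf : ∀ i ∈ s, f i = 1 ∨ f i = -1) (hsum : ∑ i ∈ s, f i = 0) :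
    2 * #{i ∈ s | f i = 1} = #s := by
  have hneg : ∑ i ∈ s with ¬f i = 1, f i = -#{i ∈ s | ¬f i = 1} := by
    rw [card_eq_sum_ones, Nat.cast_sum, ← sum_neg_distrib]
    refine sum_congr rfl fun i hi => ?_
    rw [mem_filter] at hi
    simpa [hi.2] using hf i hi.1
  have hpos : ∑ i ∈ s with f i = 1, f i = #{i ∈ s | f i = 1} := by
    rw [card_eq_sum_ones, Nat.cast_sum]
    exact sum_congr rfl fun i hi => (mem_filter.1 hi).2
  rw [← sum_filter_add_sum_filter_not s (f · = 1), hpos, hneg] at hsum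
  have := card_filter_add_card_filter_not (s := s) (f · = 1)
  omega

section Polar

variable {H : Type*} [CommGroup H] {ε : H → ℤ}

def polar (ε : H → ℤ) (a b : H) : ℤ := ε 1 * ε a * ε b * ε (a * b)

theorem polar_comm (ε : H → ℤ) (a b : H) : polar ε a b = polar ε b a := by
  rw [polar, polar, mul_comm a b]; ring

theorem apply_mul_eq_mul_polar (hsq : ∀ x, ε x * ε x = 1) (a b : H) :
    ε (a * b) = ε 1 * ε a * ε b * polar ε a b := calc
  ε (a * b) = (ε 1 * ε 1) * (ε a * ε a) * (ε b * ε b) * ε (a * b) := by simp only [hsq, one_mul]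
  _ = ε 1 * ε a * ε b * polar ε a b := by rw [polar]; ring

theorem polar_one_left (hsq : ∀ x, ε x * ε x = 1) (b : H) : polar ε 1 b = 1 := by
  rw [polar, one_mul, mul_assoc, hsq, hsq, one_mul]

theorem polar_mul_self (hsq : ∀ x, ε x * ε x = 1) (a b : H) :
    polar ε a b * polar ε a b = 1 := calc
  _ = (ε 1 * ε 1) * (ε a * ε a) * (ε b * ε b) * (ε (a * b) * ε (a * b)) := by rw [polar]; ring
  _ = 1 := by simp only [hsq, one_mul]

theorem polar_inv_left (hsq : ∀ x, ε x * ε x = 1)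
    (hbil : ∀ a b c : H, polar ε (a * b) c = polar ε a c * polar ε b c) (a b : H) :
    polar ε a⁻¹ b = polar ε a b := calc
  polar ε a⁻¹ b = polar ε a⁻¹ b * (polar ε a b * polar ε a b) := by
    rw [polar_mul_self hsq, mul_one]
  _ = polar ε a b := by rw [← mul_assoc, ← hbil, inv_mul_cancel, polar_one_left hsq, one_mul]

def polarHom (hsq : ∀ x, ε x * ε x = 1)
    (hbil : ∀ a b c : H, polar ε (a * b) c = polar ε a c * polar ε b c) : H →* H →* ℤ where
  toFun a :=
    { toFun := polar ε a
      map_one' := by rw [polar_comm, polar_one_left hsq]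
      map_mul' := fun b c => by simp only [polar_comm ε a, hbil] }
  map_one' := MonoidHom.ext (polar_one_left hsq)
  map_mul' a b := MonoidHom.ext (hbil a b)

theorem apply_eq_polar_of_mem_orthogonal (hsq : ∀ x, ε x * ε x = 1)
    (hbil : ∀ a b c : H, polar ε (a * b) c = polar ε a c * polar ε b c) {W : Subgroup H}
    [Fintype W] (hco : orthogonal (polarHom hsq hbil) W ≤ W) {α₀ : H}
    (hcharmed : ∑ w : W, ε (α₀ * w) ≠ 0) {γ : H} (hγ : γ ∈ orthogonal (polarHom hsq hbil) W) :
    ε γ = ε 1 * polar ε α₀ γ := by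
  set c := ε 1 * ε γ * polar ε α₀ γ
  have hshift (w : W) : ε (α₀ * ↑(w * ⟨γ, hco hγ⟩)) = c * ε (α₀ * w) := by
    have hwγ : polar ε w γ = 1 := mem_orthogonal.1 hγ w w.2
    rw [Subgroup.coe_mul, Subgroup.coe_mk, ← mul_assoc, apply_mul_eq_mul_polar hsq, hbil, hwγ]
    ring
  have hc : c = 1 := by
    refine (mul_eq_right₀ hcharmed).1 ?_
    calc c * ∑ w : W, ε (α₀ * w) = ∑ w : W, ε (α₀ * ↑(w * ⟨γ, hco hγ⟩)) := by
          simp only [hshift, mul_sum]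
      _ = ∑ w : W, ε (α₀ * w) := Equiv.sum_comp (Equiv.mulRight _) (fun w : W => ε (α₀ * w))
  linear_combination (-ε γ) * hc + (ε 1 * polar ε α₀ γ) * hsq γ

theorem apply_mul_eq_of_mem_orthogonal (hsq : ∀ x, ε x * ε x = 1)
    (hbil : ∀ a b c : H, polar ε (a * b) c = polar ε a c * polar ε b c) {W : Subgroup H}
    [Fintype W] (hco : orthogonal (polarHom hsq hbil) W ≤ W) {α₀ : H}
    (hcharmed : ∑ w : W, ε (α₀ * w) ≠ 0) {γ : H} (hγ : γ ∈ orthogonal (polarHom hsq hbil) W)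
    (β : H) : ε (β * γ) = ε β * polar ε (β⁻¹ * α₀) γ := by
  rw [apply_mul_eq_mul_polar hsq, apply_eq_polar_of_mem_orthogonal hsq hbil hco hcharmed hγ, hbil,
    polar_inv_left hsq hbil]
  linear_combination (ε β * polar ε α₀ γ * polar ε β γ) * hsq 1

end Polar

open Classical in
theorem stmt_8_general
    (H : Type*) [CommGroup H] [Fintype H]
    (ε : H → ℤ) (hval : ∀ x, ε x = 1 ∨ ε x = -1)
    (hbil : ∀ α β γ : H,
      ε 1 * ε (α * β) * ε γ * ε (α * β * γ)
        = (ε 1 * ε α * ε γ * ε (α * γ)) * (ε 1 * ε β * ε γ * ε (β * γ)))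
    (hnd : ∀ α : H, (∀ β : H, ε 1 * ε α * ε β * ε (α * β) = 1) → α = 1)
    (W : Subgroup H)
    (hco : ∀ β : H, (∀ w ∈ W, ε 1 * ε w * ε β * ε (w * β) = 1) → β ∈ W)
    (α₀ : H) (hcharmed : (∑ w : W, ε (α₀ * (w : H))) ≠ 0)
    (β : H) :
    (β⁻¹ * α₀ ∈ W →
      ∀ γ : H, (∀ w ∈ W, ε 1 * ε w * ε γ * ε (w * γ) = 1) → ε (β * γ) = ε β) ∧
    (β⁻¹ * α₀ ∉ W →
      2 * (Finset.univ.filter fun γ : H =>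
            (∀ w ∈ W, ε 1 * ε w * ε γ * ε (w * γ) = 1) ∧ ε (β * γ) = 1).card
        = (Finset.univ.filter fun γ : H =>
            ∀ w ∈ W, ε 1 * ε w * ε γ * ε (w * γ) = 1).card) := by
  have hsq (x : H) : ε x * ε x = 1 := by rcases hval x with h | h <;> rw [h] <;> norm_num
  set B := polarHom hsq hbil
  have hεβγ (γ : H) (hγ : γ ∈ orthogonal B W) : ε (β * γ) = ε β * B (β⁻¹ * α₀) γ :=
    apply_mul_eq_of_mem_orthogonal hsq hbil (fun γ hγ => hco γ hγ) hcharmed hγ β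
  refine ⟨fun hβ γ hγ => ?_, fun hβ => ?_⟩
  · have hpolar : B (β⁻¹ * α₀) γ = 1 := hγ _ hβ
    rw [hεβγ γ hγ, hpolar, mul_one]
  · rw [← filter_filter]
    refine two_mul_card_filter_eq_one _ _ (fun γ _ => hval _) ?_
    have hmem (γ : H) : γ ∈ ({γ | ∀ w ∈ W, ε 1 * ε w * ε γ * ε (w * γ) = 1} : Finset H) ↔
        γ ∈ orthogonal B W := by
      rw [mem_filter]; exact and_iff_right (mem_univ γ)
    rw [sum_subtype (F := inferInstance) _ hmem, ← mul_zero (ε β),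
      ← sum_orthogonal_eq_zero (B := B) (polar_comm ε) hnd hβ, mul_sum]
    exact sum_congr rfl fun γ _ => hεβγ γ γ.2

open Classical in
/-- With `H`, `ε`, `W` as in the charmed coset lemma, let `α₀W` be the unique
(charmed) coset on which `∑ ε` is nonzero.  Then on any coset `βW^⊥` of `W^⊥` contained in the
charmed coset, `ε` is constant; whereas on any coset `βW^⊥` not contained in the charmed coset,
`ε` takes the values `+1` and `-1` equally often. -/
theorem stmt_8
    (H : Type*) [CommGroup H] [Fintype H]
    (htwo : ∀ x : H, x * x = 1)
    (ε : H → ℤ) (hval : ∀ x, ε x = 1 ∨ ε x = -1)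
    (hbil : ∀ α β γ : H,
      ε 1 * ε (α * β) * ε γ * ε (α * β * γ)
        = (ε 1 * ε α * ε γ * ε (α * γ)) * (ε 1 * ε β * ε γ * ε (β * γ)))
    (hnd : ∀ α : H, (∀ β : H, ε 1 * ε α * ε β * ε (α * β) = 1) → α = 1)
    (W : Subgroup H)
    (hco : ∀ β : H, (∀ w ∈ W, ε 1 * ε w * ε β * ε (w * β) = 1) → β ∈ W)
    (α₀ : H) (hcharmed : (∑ w : W, ε (α₀ * (w : H))) ≠ 0)
    (β : H) :
    (β⁻¹ * α₀ ∈ W →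
      ∀ γ : H, (∀ w ∈ W, ε 1 * ε w * ε γ * ε (w * γ) = 1) → ε (β * γ) = ε β) ∧
    (β⁻¹ * α₀ ∉ W →
      2 * (Finset.univ.filter fun γ : H =>
            (∀ w ∈ W, ε 1 * ε w * ε γ * ε (w * γ) = 1) ∧ ε (β * γ) = 1).card
        = (Finset.univ.filter fun γ : H =>
            ∀ w ∈ W, ε 1 * ε w * ε γ * ε (w * γ) = 1).card) :=
  stmt_8_general H ε hval hbil hnd W hco α₀ hcharmed β
end

section
/- Let K be a 2-adic local field with uniformizer π, ramification index e = v(2), and residue field of size q. Let C(x,y,z) be an integer-matrix ternary quadratic form over O_K with unit determinant, diagonalized as a₁x² + a₂y² + a₃z². If ξ ∈ O_K³ is a primitive vector with C(ξ) ≡ 0 mod π^m for some m > 2e, then there exists ξ' ∈ O_K³ with ξ' ≡ ξ mod π^{m−e} and C(ξ') = 0. -/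
/-!
If no index has both `a j` and `ξ j` units, the unit coordinate `ξ i₀` has `π ∣ a i₀`; since
`π² ∤ ∏ aᵢ`, every other `ξ i` is divisible by `π`, and then `π² ∣ C(ξ)` forces `π² ∣ a i₀`.
As `m > 2e` we have `C(ξ) = 4r` with `π ∣ r`, and replacing `ξ j` by `ξ j s` with
`s² = 1 - 4r / (a j ξ j²)` kills `C`. Hensel's lemma for `y² + y + r / (a j ξ j²)` gives such an
`s = 1 + 2y`, and `s ≡ 1 mod 2r` because `y (1 + y)` is associated to `r`.
-/

open IsLocalRing Polynomial

section Henselian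

variable {R : Type*} [CommRing R] [IsLocalRing R] [HenselianRing R (maximalIdeal R)]

theorem exists_sq_eq_one_add_four_mul {r : R} (hr : r ∈ maximalIdeal R) :
    ∃ s, s ^ 2 = 1 + 4 * r ∧ 2 * r ∣ s - 1 := by
  obtain ⟨y, hroot, hy⟩ := HenselianRing.is_henselian (I := maximalIdeal R) (X ^ 2 + X - C r)
    (by monicity!) 0 (by simpa using hr) (by simp)
  have hyr : y * (1 + y) = r := by
    linear_combination (by simpa using hroot : y ^ 2 + y - r = 0)
  have hunit : IsUnit (1 + y) := by
    simpa using
      isUnit_one_sub_self_of_mem_nonunits (-y) ((maximalIdeal R).neg_mem (by simpa using hy))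
  refine ⟨1 + 2 * y, by linear_combination 4 * hyr, ?_⟩
  simpa using mul_dvd_mul_left 2 (Associated.symm ⟨hunit.unit, hyr⟩).dvd

theorem exists_sum_mul_sq_eq_zero_of_eq_four_mul {ι : Type*} [Fintype ι] [DecidableEq ι]
    {a ξ : ι → R} {j : ι} (haj : IsUnit (a j)) (hξj : IsUnit (ξ j)) {r : R}
    (hr : r ∈ maximalIdeal R) (hC : ∑ i, a i * ξ i ^ 2 = 4 * r) :
    ∃ ξ' : ι → R, (∀ i, 2 * r ∣ ξ' i - ξ i) ∧ ∑ i, a i * ξ' i ^ 2 = 0 := by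
  obtain ⟨u, hu⟩ := haj.mul (hξj.pow 2)
  have hu_inv : a j * ξ j ^ 2 * ↑u⁻¹ = 1 := by rw [← hu, u.mul_inv]
  obtain ⟨s, hs, hs1⟩ := exists_sq_eq_one_add_four_mul
    ((maximalIdeal R).mul_mem_right (-↑u⁻¹ : R) hr)
  have hsplit (f : ι → R) : ∑ i, a i * f i ^ 2 = a j * f j ^ 2 + ∑ i ∈ {j}ᶜ, a i * f i ^ 2 :=
    Fintype.sum_eq_add_sum_compl j _
  refine ⟨Function.update ξ j (ξ j * s), fun i => ?_, ?_⟩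
  · rcases eq_or_ne i j with rfl | hij
    · rw [Function.update_self, ← mul_sub_one]
      exact (dvd_trans ⟨-↑u⁻¹, by ring⟩ hs1).mul_left _
    · simp [hij]
  · have hrest : ∑ i ∈ {j}ᶜ, a i * Function.update ξ j (ξ j * s) i ^ 2
        = ∑ i ∈ {j}ᶜ, a i * ξ i ^ 2 :=
      Finset.sum_congr rfl fun i hi => by
        rw [Function.update_of_ne (Finset.mem_compl.mp hi ∘ Finset.mem_singleton.mpr)]
    rw [hsplit, hrest, Function.update_self]
    rw [hsplit] at hC
    linear_combination hC + a j * ξ j ^ 2 * hs - 4 * r * hu_inv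

end Henselian

theorem exists_isUnit_coeff_isUnit_of_sq_dvd {ι R : Type*} [Fintype ι] [DecidableEq ι]
    [CommRing R] [IsLocalRing R] {π : R} (hπ : maximalIdeal R = Ideal.span {π})
    {a ξ : ι → R} (hdet : ¬π ^ 2 ∣ ∏ i, a i) (hprim : ∃ i, IsUnit (ξ i))
    (hC : π ^ 2 ∣ ∑ i, a i * ξ i ^ 2) : ∃ j, IsUnit (a j) ∧ IsUnit (ξ j) := by
  have hdvd (x : R) : π ∣ x ↔ ¬IsUnit x := by
    rw [← Ideal.mem_span_singleton, ← hπ, mem_maximalIdeal, mem_nonunits_iff]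
  by_contra! h
  obtain ⟨i₀, hi₀⟩ := hprim
  have ha₀ : π ∣ a i₀ := (hdvd _).mpr fun ha => h i₀ ha hi₀
  have hξ (i : ι) (hi : i ∈ ({i₀}ᶜ : Finset ι)) : π ^ 2 ∣ a i * ξ i ^ 2 := by
    refine (pow_dvd_pow_of_dvd ((hdvd _).mpr fun hξi => hdet ?_) 2).mul_left _
    have hi : i ≠ i₀ := by simpa using hi
    have ha : π ∣ a i := (hdvd _).mpr fun ha => h i ha hξi
    calc π ^ 2 ∣ ∏ k ∈ {i, i₀}, a k := by rw [Finset.prod_pair hi, sq]; exact mul_dvd_mul ha ha₀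
      _ ∣ ∏ k, a k := Finset.prod_dvd_prod_of_subset _ _ _ (Finset.subset_univ _)
  rw [Fintype.sum_eq_add_sum_compl i₀, dvd_add_left (Finset.dvd_sum hξ),
    (hi₀.pow 2).dvd_mul_right] at hC
  exact hdet (hC.trans (Finset.dvd_prod_of_mem a (Finset.mem_univ i₀)))

theorem stmt_10_general
    (O : Type*) [CommRing O] [IsDomain O] [IsDiscreteValuationRing O]
    [IsAdicComplete (IsLocalRing.maximalIdeal O) O]
    (π : O) (hπ : Irreducible π)
    (e : ℕ) (he : 0 < e) (h2 : Associated (π ^ e) (2 : O))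
    (a : Fin 3 → O) (hdet : ¬ (π ^ 2 ∣ ∏ i, a i))
    (ξ : Fin 3 → O) (hprim : ∃ i, IsUnit (ξ i))
    (m : ℕ) (hm : 2 * e < m)
    (hC : π ^ m ∣ ∑ i, a i * ξ i ^ 2) :
    ∃ ξ' : Fin 3 → O,
      (∀ i, π ^ (m - e) ∣ (ξ' i - ξ i)) ∧ ∑ i, a i * ξ' i ^ 2 = 0 := by
  have hmax := (IsDiscreteValuationRing.irreducible_iff_uniformizer π).mp hπ
  obtain ⟨j, haj, hξj⟩ := exists_isUnit_coeff_isUnit_of_sq_dvd hmax hdet hprim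
    ((pow_dvd_pow π (by omega)).trans hC)
  obtain ⟨c, hc⟩ := hC
  obtain ⟨v, hv⟩ := h2
  have hvv : (v : O) * ↑v⁻¹ = 1 := v.mul_inv
  obtain ⟨k, rfl⟩ : ∃ k, m = 2 * e + (k + 1) := ⟨m - 2 * e - 1, by omega⟩
  set r := π ^ (k + 1) * c * ↑v⁻¹ ^ 2
  have hr : r ∈ maximalIdeal O := by
    rw [hmax, Ideal.mem_span_singleton]
    exact ((dvd_pow_self π k.succ_ne_zero).mul_right c).mul_right _
  have h4 : ∑ i, a i * ξ i ^ 2 = 4 * r := by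
    linear_combination hc - π ^ (2 * e + (k + 1)) * c * (↑v * ↑v⁻¹ + 1) * hvv
      + (π ^ e * ↑v + 2) * π ^ (k + 1) * c * ↑v⁻¹ ^ 2 * hv
  obtain ⟨ξ', hξ', hzero⟩ := exists_sum_mul_sq_eq_zero_of_eq_four_mul haj hξj hr h4
  refine ⟨ξ', fun i => dvd_trans ⟨c * ↑v⁻¹, ?_⟩ (hξ' i), hzero⟩
  rw [show 2 * e + (k + 1) - e = e + (k + 1) by omega]
  linear_combination -π ^ (k + 1) * c * ↑v⁻¹ ^ 2 * hv + π ^ (e + (k + 1)) * c * ↑v⁻¹ * hvv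

/-- Let `K` be a 2-adic local field, with ring of integers `O` (a complete
discrete valuation ring with finite residue field), uniformizer `π` and ramification index
`e = v(2)`.  Let `C(x,y,z) = a₁x² + a₂y² + a₃z²` be a diagonal integer ternary quadratic form
whose determinant `a₁a₂a₃` has valuation at most `1`.  If `ξ ∈ O³` is a primitive vector with
`C(ξ) ≡ 0 mod π^m` for some `m > 2e`, then there exists `ξ' ∈ O³` with
`ξ' ≡ ξ mod π^(m-e)` and `C(ξ') = 0`. -/
theorem stmt_10
    (O : Type*) [CommRing O] [IsDomain O] [IsDiscreteValuationRing O]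
    [IsAdicComplete (IsLocalRing.maximalIdeal O) O]
    [Finite (IsLocalRing.ResidueField O)]
    (π : O) (hπ : Irreducible π)
    (e : ℕ) (he : 0 < e) (h2 : Associated (π ^ e) (2 : O))
    (a : Fin 3 → O) (hdet : ¬ (π ^ 2 ∣ ∏ i, a i))
    (ξ : Fin 3 → O) (hprim : ∃ i, IsUnit (ξ i))
    (m : ℕ) (hm : 2 * e < m)
    (hC : π ^ m ∣ ∑ i, a i * ξ i ^ 2) :
    ∃ ξ' : Fin 3 → O,
      (∀ i, π ^ (m - e) ∣ (ξ' i - ξ i)) ∧ ∑ i, a i * ξ' i ^ 2 = 0 :=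
  stmt_10_general O π hπ e he h2 a hdet ξ hprim m hm hC
end

section
/- Let K be a 2-adic local field with e = v(2) even, and let C be a unimodular ternary quadratic form over O_K (integer-matrix, determinant a unit) that is congruent to c·λ² modulo 2 for some unit c and linear form λ (i.e. has maximal squareness e). Then C has a nontrivial zero over K. -/
/-!
Since `2 ∈ 𝔪`, the diagonal of `M` is `c λᵢ²` modulo `𝔪`; if `λ ≡ 0` the reduction of `M` would
be alternating of odd size, hence singular. So `λ` is unimodular, and after a change of basis
`λ(y) = y₀`. Then `M₁₁, M₂₂ ∈ 2O`, and unimodularity forces `M₁₂` to be a unit.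
Write `2 = ϖ² v` with `ϖ = π^(e/2)`. On the line `y = (ϖw, 1, t)` the form equals
`ϖ² (A + B t + G t²)` with `A ≡ c w² + v M₁₁/2` and `B ≡ v M₁₂` modulo `𝔪`. The residue field is
finite of characteristic `2`, hence perfect, so `w` can be chosen with `A ∈ 𝔪`; as `B` is a unit,
Hensel's lemma then yields the root `t`.
-/

open Matrix Polynomial IsLocalRing

namespace IsLocalRing

variable {R : Type*} [CommRing R] [IsLocalRing R]

theorem isUnit_add_of_mem_maximalIdeal {a b : R} (ha : a ∈ maximalIdeal R) (hb : IsUnit b) :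
    IsUnit (a + b) := by
  rw [← residue_ne_zero_iff_isUnit, map_add, (residue_eq_zero_iff a).mpr ha, zero_add]
  exact (residue_ne_zero_iff_isUnit b).mpr hb

theorem two_mem_maximalIdeal_of_associated {ϖ : R} (hϖ : ϖ ∈ maximalIdeal R)
    (h2 : Associated (ϖ ^ 2) 2) : (2 : R) ∈ maximalIdeal R :=
  (Ideal.mem_iff_of_associated h2).mp (Ideal.pow_mem_of_mem _ hϖ 2 two_pos)

theorem residue_two_eq_zero (h2 : (2 : R) ∈ maximalIdeal R) : (2 : ResidueField R) = 0 := by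
  rw [← map_ofNat (residue R) 2, residue_eq_zero_iff]
  exact h2

theorem exists_mul_sq_add_mem_maximalIdeal [Finite (ResidueField R)]
    (h2 : (2 : R) ∈ maximalIdeal R) {c : R} (hc : IsUnit c) (b : R) :
    ∃ w : R, c * w ^ 2 + b ∈ maximalIdeal R := by
  have : CharP (ResidueField R) 2 :=
    CharTwo.of_one_ne_zero_of_two_eq_zero one_ne_zero (residue_two_eq_zero h2)
  have hc' : residue R c ≠ 0 := (residue_ne_zero_iff_isUnit c).mpr hc
  obtain ⟨z, hz⟩ := isSquare_of_charTwo' (-residue R b / residue R c)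
  obtain ⟨w, rfl⟩ := residue_surjective z
  refine ⟨w, (residue_eq_zero_iff _).mp ?_⟩
  rw [map_add, map_mul, map_pow, sq, ← hz]
  field_simp
  ring

theorem exists_root_of_mem_maximalIdeal_of_isUnit [HenselianRing R (maximalIdeal R)]
    {a b c : R} (ha : a ∈ maximalIdeal R) (hb : IsUnit b) :
    ∃ t : R, a + b * t + c * t ^ 2 = 0 := by
  -- Hensel applies to the monic `X² + bX + ac`; a root `s ∈ 𝔪` of it gives `t = -a / (s + b)`.
  have hmonic : (X ^ 2 + (C b * X + C (a * c))).Monic :=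
    monic_X_pow_add (by compute_degree!)
  obtain ⟨s, hs, hs0⟩ := HenselianRing.is_henselian (I := maximalIdeal R) _ hmonic 0
    (by simpa using Ideal.mul_mem_right c _ ha) (by simpa using hb.map _)
  obtain ⟨u, hu⟩ := isUnit_add_of_mem_maximalIdeal (by simpa using hs0) hb
  refine ⟨-a * ↑u⁻¹, ?_⟩
  have hs' : s ^ 2 + b * s + a * c = 0 := by
    simp only [IsRoot, eval_add, eval_pow, eval_X, eval_mul, eval_C] at hs
    linear_combination hs
  have hu' : (s + b) * ↑u⁻¹ = 1 := hu ▸ u.mul_inv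
  linear_combination (a * ↑u⁻¹ ^ 2) * hs' - (a + a * ↑u⁻¹ * s) * hu'

end IsLocalRing

namespace Matrix

section CommRing

variable {n R : Type*} [Fintype n] [CommRing R]

def IsIsotropic (M : Matrix n n R) : Prop :=
  ∃ x : n → R, x ≠ 0 ∧ x ⬝ᵥ M *ᵥ x = 0

theorem sum_sum_mul_mul_eq_dotProduct_mulVec (M : Matrix n n R) (x : n → R) :
    ∑ i, ∑ j, M i j * x i * x j = x ⬝ᵥ M *ᵥ x := by
  simp only [dotProduct, mulVec, Finset.mul_sum]
  exact Finset.sum_congr rfl fun i _ ↦ Finset.sum_congr rfl fun j _ ↦ by ring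

theorem dotProduct_transpose_mul_mul_mulVec (M P : Matrix n n R) (y : n → R) :
    y ⬝ᵥ (Pᵀ * M * P) *ᵥ y = (P *ᵥ y) ⬝ᵥ M *ᵥ (P *ᵥ y) := by
  rw [← mulVec_mulVec, ← mulVec_mulVec, dotProduct_mulVec, vecMul_transpose]

theorem IsIsotropic.of_transpose_mul_mul [DecidableEq n] {M P : Matrix n n R}
    (hP : IsUnit P.det) (h : (Pᵀ * M * P).IsIsotropic) : M.IsIsotropic := by
  obtain ⟨y, hy, hy0⟩ := h
  refine ⟨P *ᵥ y, ?_, by rwa [← dotProduct_transpose_mul_mul_mulVec]⟩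
  rw [← mulVec_zero P]
  exact (mulVec_injective_of_det_mem_nonZeroDivisors hP.mem_nonZeroDivisors).ne hy

theorem IsIsotropic.map {S : Type*} [CommRing S] {M : Matrix n n R} (h : M.IsIsotropic)
    {f : R →+* S} (hf : Function.Injective f) : (M.map f).IsIsotropic := by
  obtain ⟨x, hx, hx0⟩ := h
  refine ⟨f ∘ x, fun h ↦ hx (funext fun i ↦ hf (by simpa using congrFun h i)), ?_⟩
  have : M.map f *ᵥ (f ∘ x) = f ∘ (M *ᵥ x) := funext fun i ↦ (RingHom.map_mulVec f M x i).symm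
  rw [this, ← RingHom.map_dotProduct, hx0, map_zero]

theorem two_dvd_apply_self_sub [DecidableEq n] {M : Matrix n n R} {c : R} {lam : n → R}
    (hsq : ∀ x, (2 : R) ∣ x ⬝ᵥ M *ᵥ x - c * (lam ⬝ᵥ x) ^ 2) (i : n) :
    (2 : R) ∣ M i i - c * lam i ^ 2 := by
  simpa using hsq (Pi.single i 1)

theorem exists_isUnit_det_vecMul_eq_single {lam : Fin 3 → R} {i : Fin 3} (hi : IsUnit (lam i)) :
    ∃ P : Matrix (Fin 3) (Fin 3) R, IsUnit P.det ∧ lam ᵥ* P = Pi.single 0 1 := by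
  set σ := Equiv.swap 0 i
  set ι : R := ↑hi.unit⁻¹
  have hι : lam i * ι = 1 := hi.mul_val_inv
  refine ⟨σ.permMatrix R * !![ι, -ι * lam (σ 1), -ι * lam (σ 2); 0, 1, 0; 0, 0, 1], ?_, ?_⟩
  · rw [det_mul, det_permutation, det_fin_three]
    simpa using ⟨(Equiv.Perm.sign σ).isUnit.map (Int.castRingHom R), hi.unit⁻¹.isUnit⟩
  · have hker (k : Fin 3) : -(lam i * (ι * lam k)) + lam k = 0 := by
      linear_combination -lam k * hι
    rw [← vecMul_vecMul, vecMul_permMatrix]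
    ext j
    fin_cases j <;> simp [vecMul, dotProduct, Fin.sum_univ_three, σ, hι, hker]

end CommRing

section LocalRing

variable {R : Type*} [CommRing R] [IsLocalRing R]

theorem residue_det_fin_three_of_mem {M : Matrix (Fin 3) (Fin 3) R} (hM : M.IsSymm)
    (h2 : (2 : R) ∈ maximalIdeal R) (h11 : M 1 1 ∈ maximalIdeal R)
    (h22 : M 2 2 ∈ maximalIdeal R) :
    residue R M.det = -(residue R (M 0 0) * residue R (M 1 2) ^ 2) := by
  rw [← residue_eq_zero_iff] at h11 h22
  rw [det_fin_three, ← hM.apply 0 1, ← hM.apply 0 2, ← hM.apply 1 2]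
  simp only [map_sub, map_add, map_mul, h11, h22]
  linear_combination
    residue R (M 1 0) * residue R (M 2 1) * residue R (M 2 0) * residue_two_eq_zero h2

theorem exists_isUnit_of_two_dvd_sub_mul_sq {M : Matrix (Fin 3) (Fin 3) R} (hM : M.IsSymm)
    (hdet : IsUnit M.det) (h2 : (2 : R) ∈ maximalIdeal R) {c : R} {lam : Fin 3 → R}
    (hsq : ∀ x, (2 : R) ∣ x ⬝ᵥ M *ᵥ x - c * (lam ⬝ᵥ x) ^ 2) : ∃ i, IsUnit (lam i) := by
  by_contra! hlam
  have hdiag (i : Fin 3) : M i i ∈ maximalIdeal R := by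
    obtain ⟨k, hk⟩ := two_dvd_apply_self_sub hsq i
    rw [show M i i = c * lam i ^ 2 + 2 * k by linear_combination hk]
    exact add_mem (Ideal.mul_mem_left _ _ (Ideal.pow_mem_of_mem _ (hlam i) 2 two_pos))
      (Ideal.mul_mem_right _ _ h2)
  have hres := residue_det_fin_three_of_mem hM h2 (hdiag 1) (hdiag 2)
  rw [(residue_eq_zero_iff _).mpr (hdiag 0), zero_mul, neg_zero] at hres
  exact (residue_ne_zero_iff_isUnit _).mpr hdet hres

variable [HenselianRing R (maximalIdeal R)] [Finite (ResidueField R)]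

theorem isIsotropic_of_two_dvd_sub_mul_sq_apply_zero {ϖ c : R} {N : Matrix (Fin 3) (Fin 3) R}
    (hϖ : ϖ ∈ maximalIdeal R) (h2 : Associated (ϖ ^ 2) 2) (hN : N.IsSymm) (hdet : IsUnit N.det)
    (hc : IsUnit c) (hsq : ∀ y, (2 : R) ∣ y ⬝ᵥ N *ᵥ y - c * (Pi.single 0 1 ⬝ᵥ y) ^ 2) :
    N.IsIsotropic := by
  have two_mem := two_mem_maximalIdeal_of_associated hϖ h2
  obtain ⟨v, hv⟩ := h2
  obtain ⟨m, hm⟩ := two_dvd_apply_self_sub hsq 0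
  obtain ⟨a, ha⟩ := two_dvd_apply_self_sub hsq 1
  obtain ⟨d, hd⟩ := two_dvd_apply_self_sub hsq 2
  simp only [Pi.single_eq_same, Pi.single_eq_of_ne (show (1 : Fin 3) ≠ 0 by decide),
    Pi.single_eq_of_ne (show (2 : Fin 3) ≠ 0 by decide)] at hm ha hd
  have h12 : IsUnit (N 1 2) := by
    have hres := residue_det_fin_three_of_mem hN two_mem
      (by rw [show N 1 1 = 2 * a by linear_combination ha]; exact Ideal.mul_mem_right _ _ two_mem)
      (by rw [show N 2 2 = 2 * d by linear_combination hd]; exact Ideal.mul_mem_right _ _ two_mem)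
    rw [← residue_ne_zero_iff_isUnit] at hdet ⊢
    intro h
    rw [hres, h] at hdet
    simp at hdet
  obtain ⟨w, hw⟩ := exists_mul_sq_add_mem_maximalIdeal two_mem hc (v * a)
  obtain ⟨t, ht⟩ := exists_root_of_mem_maximalIdeal_of_isUnit (c := v * d)
    (a := c * w ^ 2 + v * a + (2 * m * w ^ 2 + v * ϖ * w * N 0 1))
    (b := v * (ϖ * w * N 0 2 + N 1 2))
    (add_mem hw (add_mem (Ideal.mul_mem_right _ _ (Ideal.mul_mem_right _ _ two_mem))
      (Ideal.mul_mem_right _ _ (Ideal.mul_mem_right _ _ (Ideal.mul_mem_left _ _ hϖ)))))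
    (v.isUnit.mul (isUnit_add_of_mem_maximalIdeal
      (Ideal.mul_mem_right _ _ (Ideal.mul_mem_right _ _ hϖ)) h12))
  refine ⟨![ϖ * w, 1, t], fun h ↦ by simpa using congrFun h 1, ?_⟩
  calc ![ϖ * w, 1, t] ⬝ᵥ N *ᵥ ![ϖ * w, 1, t]
      = ϖ ^ 2 * (c * w ^ 2 + v * a + (2 * m * w ^ 2 + v * ϖ * w * N 0 1)
          + v * (ϖ * w * N 0 2 + N 1 2) * t + v * d * t ^ 2) := by
        simp only [dotProduct, mulVec, Fin.sum_univ_three, cons_val_zero, cons_val_one,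
          cons_val_two, head_cons, tail_cons]
        linear_combination (ϖ ^ 2 * w ^ 2) * hm + ha + t ^ 2 * hd + (ϖ * w) * hN.apply 0 1
          + (ϖ * w * t) * hN.apply 0 2 + t * hN.apply 1 2
          - (a + d * t ^ 2 + ϖ * w * N 0 1 + ϖ * w * t * N 0 2 + t * N 1 2) * hv
    _ = 0 := by rw [ht, mul_zero]

theorem isIsotropic_of_two_dvd_sub_mul_sq {ϖ c : R} {M : Matrix (Fin 3) (Fin 3) R}
    {lam : Fin 3 → R} (hϖ : ϖ ∈ maximalIdeal R) (h2 : Associated (ϖ ^ 2) 2) (hM : M.IsSymm)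
    (hdet : IsUnit M.det) (hc : IsUnit c)
    (hsq : ∀ x, (2 : R) ∣ x ⬝ᵥ M *ᵥ x - c * (lam ⬝ᵥ x) ^ 2) : M.IsIsotropic := by
  obtain ⟨i, hi⟩ := exists_isUnit_of_two_dvd_sub_mul_sq hM hdet
    (two_mem_maximalIdeal_of_associated hϖ h2) hsq
  obtain ⟨P, hP, hlamP⟩ := exists_isUnit_det_vecMul_eq_single hi
  refine IsIsotropic.of_transpose_mul_mul hP
    (isIsotropic_of_two_dvd_sub_mul_sq_apply_zero hϖ h2 ?_ ?_ hc fun y ↦ ?_)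
  · simp only [IsSymm, transpose_mul, transpose_transpose, hM.eq, Matrix.mul_assoc]
  · simpa [det_mul] using (hP.mul hdet).mul hP
  · rw [dotProduct_transpose_mul_mul_mulVec, ← hlamP, ← dotProduct_mulVec]
    exact hsq _

end LocalRing

end Matrix

/-- Let `K` be a 2-adic local field with `e = v(2)` even, ring of integers
`O`, and let `C` be a unimodular integer-matrix ternary quadratic form over `O` (determinant a
unit) that is congruent to `c·λ²` modulo `2` (`= π^e`) for some unit `c` and linear form `λ`
(i.e. it has maximal squareness `e`).  Then `C` has a nontrivial zero over `K`. -/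
theorem stmt_11
    (O K : Type*) [CommRing O] [IsDomain O] [IsDiscreteValuationRing O]
    [IsAdicComplete (IsLocalRing.maximalIdeal O) O]
    [Finite (IsLocalRing.ResidueField O)]
    [Field K] [Algebra O K] [IsFractionRing O K]
    (π : O) (hπ : Irreducible π)
    (e : ℕ) (he : 0 < e) (heven : Even e) (h2 : Associated (π ^ e) (2 : O))
    (M : Matrix (Fin 3) (Fin 3) O) (hsymm : M.IsSymm) (hdet : IsUnit M.det)
    (c : O) (hc : IsUnit c) (lam : Fin 3 → O)
    (hsq : ∀ x : Fin 3 → O,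
      (2 : O) ∣ ((∑ i, ∑ j, M i j * x i * x j) - c * (∑ i, lam i * x i) ^ 2)) :
    ∃ ξ : Fin 3 → K, ξ ≠ 0 ∧ ∑ i, ∑ j, algebraMap O K (M i j) * ξ i * ξ j = 0 := by
  obtain ⟨k, rfl⟩ := heven
  have hϖ : π ^ k ∈ maximalIdeal O :=
    Ideal.pow_mem_of_mem _ ((mem_maximalIdeal _).mpr hπ.not_isUnit) k (by omega)
  have h2' : Associated ((π ^ k) ^ 2) 2 := by rwa [← pow_mul, mul_two]
  have hsq' (x : Fin 3 → O) : (2 : O) ∣ x ⬝ᵥ M *ᵥ x - c * (lam ⬝ᵥ x) ^ 2 := by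
    simpa only [sum_sum_mul_mul_eq_dotProduct_mulVec, dotProduct] using hsq x
  obtain ⟨ξ, hξ, hξ0⟩ := (isIsotropic_of_two_dvd_sub_mul_sq hϖ h2' hsymm hdet hc hsq').map
    (IsFractionRing.injective O K)
  exact ⟨ξ, hξ, by simpa only [← sum_sum_mul_mul_eq_dotProduct_mulVec, map_apply] using hξ0⟩
end

section
/- Let (ρ₁,…,ρₙ) be a reduced basis of a lattice ωI as above, and let (ρ'₁,…,ρ'ₙ) be another basis of ωI sorted by increasing valuation. Then v(ρ'_k) ≤ v(ρ_k) for every k. Consequently two reduced bases have equal valuation sequences, and the change-of-basis matrix [c_{ij}] between two reduced bases satisfies v(c_{ij}) ≥ v(ρᵢ) − v(ρⱼ) for all i, j. -/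
/-- The valuation of a vector in `K̄ⁿ`: the minimum of the valuations of its coordinates. -/
noncomputable def vecVal {F : Type*} [Field F] {n : ℕ} (v : F → WithTop ℚ)
    (x : Fin n → F) : WithTop ℚ :=
  Finset.univ.inf fun i => v (x i)

/-- `ρ` is a reduced basis of the full `O`-lattice `I ⊆ Fⁿ`. -/
def IsReducedBasis {F : Type*} [Field F] {n : ℕ} (v : F → WithTop ℚ) (K : Subfield F)
    (O : Type*) [CommRing O] [Algebra O F]
    (I : Submodule O (Fin n → F)) (ρ : Fin n → Fin n → F) : Prop :=
  (∀ i, ρ i ∈ I) ∧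
  Submodule.span O (Set.range ρ) = I ∧
  LinearIndependent F ρ ∧
  (∀ i j : Fin n, i ≤ j → vecVal v (ρ i) ≤ vecVal v (ρ j)) ∧
  (∀ c : Fin n → F, (∀ i, c i ∈ K) →
    ∀ i, vecVal v (∑ j, c j • ρ j) ≤ vecVal v (c i • ρ i))

/-!
Write `ρ' = A ρ` and `ρ = B ρ'` with `A`, `B` having entries in `O`. Linear independence of `ρ`
gives `det B · det A = 1`, so `v(det A) = 0`. If `v(ρ'_k) > v(ρ_k)` for some `k`, reducedness of
`ρ` yields `v(ρ'_k) ≤ v(ρ'_j) ≤ v(A_{ji}) + v(ρ_i) ≤ v(A_{ji}) + v(ρ_k)` for `j ≥ k ≥ i`, hence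
`v(A_{ji}) > 0` on that block. Every permutation meets the block, so every term of the Leibniz
expansion of `det A` has positive valuation, contradicting `v(det A) = 0`. The remaining claims
follow by symmetry and from reducedness of `ρ` once more.
-/

open Finset Matrix

theorem Equiv.Perm.exists_le_and_le_apply {α : Type*} [LinearOrder α] [LocallyFiniteOrderBot α]
    (σ : Equiv.Perm α) (k : α) : ∃ j ≤ k, k ≤ σ j := by
  by_contra! h
  have hcard : #(Iic k) ≤ #(Iio k) :=
    card_le_card_of_injOn σ (fun j hj => mem_Iio.2 (h j (mem_Iic.1 hj))) σ.injective.injOn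
  rw [Iic_eq_cons_Iio, card_cons] at hcard
  omega

namespace AddValuation

variable {R Γ : Type*} [CommRing R] [LinearOrderedAddCommMonoidWithTop Γ] (w : AddValuation R Γ)

theorem map_prod {ι : Type*} (s : Finset ι) (f : ι → R) :
    w (∏ i ∈ s, f i) = ∑ i ∈ s, w (f i) := by
  induction s using Finset.cons_induction with
  | empty => simp
  | cons a s ha ih => rw [prod_cons, sum_cons, map_mul, ih]

theorem map_intCast_sign {ι : Type*} [DecidableEq ι] [Fintype ι] (σ : Equiv.Perm ι) :
    w ((Equiv.Perm.sign σ : ℤ) : R) = 0 := by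
  rcases Int.units_eq_one_or (Equiv.Perm.sign σ) with h | h <;> simp [h]

theorem pos_map_det_of_pos_block {ι : Type*} [DecidableEq ι] [Fintype ι] [LinearOrder ι]
    [LocallyFiniteOrderBot ι] (M : Matrix ι ι R) (k : ι) (hint : ∀ i j, 0 ≤ w (M i j))
    (hblock : ∀ i j, k ≤ i → j ≤ k → 0 < w (M i j)) : 0 < w M.det := by
  rw [det_apply']
  refine w.map_lt_sum ((hblock k k le_rfl le_rfl).trans_le le_top).ne fun σ _ => ?_
  obtain ⟨j, hjk, hkσj⟩ := σ.exists_le_and_le_apply k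
  rw [map_mul, map_intCast_sign, zero_add, map_prod, ← add_sum_erase _ _ (mem_univ j)]
  exact (hblock _ _ hkσj hjk).trans_le (le_add_of_nonneg_right (sum_nonneg fun i _ => hint _ _))

theorem map_eq_zero_of_mul_eq_one {x y : R} (hxy : x * y = 1) (hx : 0 ≤ w x) (hy : 0 ≤ w y) :
    w x = 0 := by
  refine le_antisymm ?_ hx
  calc w x ≤ w x + w y := le_add_of_nonneg_right hy
    _ = 0 := by rw [← map_mul, hxy, map_one]

end AddValuation

theorem Matrix.det_mul_det_eq_one_of_linearIndependent {F ι : Type*} [Field F] [Fintype ι]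
    [DecidableEq ι] {ρ ρ' : ι → ι → F} {A B : Matrix ι ι F} (hρ : LinearIndependent F ρ)
    (hA : ∀ j, ρ' j = ∑ i, A j i • ρ i) (hB : ∀ i, ρ i = ∑ j, B i j • ρ' j) :
    B.det * A.det = 1 := by
  have of_eq_mul {M : Matrix ι ι F} {σ τ : ι → ι → F} (h : ∀ j, τ j = ∑ i, M j i • σ i) :
      of τ = M * of σ := by
    ext j l
    simp [h j, mul_apply, Finset.sum_apply]
  have hdet := congrArg det ((of_eq_mul hB).trans (congrArg (B * ·) (of_eq_mul hA)))
  rw [det_mul, det_mul, ← mul_assoc] at hdet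
  have hρdet : (of ρ).det ≠ 0 :=
    ((isUnit_iff_isUnit_det _).1 (linearIndependent_rows_iff_isUnit.1 hρ)).ne_zero
  exact (mul_eq_right₀ hρdet).1 hdet.symm

theorem exists_sum_algebraMap_smul_eq {O F M ι ι' : Type*} [CommRing O] [Field F] [Algebra O F]
    [AddCommGroup M] [Module F M] [Module O M] [IsScalarTower O F M] [Fintype ι] {ρ : ι → M}
    {ρ' : ι' → M} (h : ∀ j, ρ' j ∈ Submodule.span O (Set.range ρ)) :
    ∃ A : Matrix ι' ι O, ∀ j, ρ' j = ∑ i, algebraMap O F (A j i) • ρ i := by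
  choose A hA using fun j => (Submodule.mem_span_range_iff_exists_fun O).1 (h j)
  exact ⟨A, fun j => by simp only [algebraMap_smul, hA]⟩

theorem vecVal_smul {F : Type*} [Field F] {n : ℕ} (w : AddValuation F (WithTop ℚ)) (a : F)
    (x : Fin n → F) : vecVal w (a • x) = w a + vecVal w x := by
  simp only [vecVal, Pi.smul_apply, smul_eq_mul, w.map_mul]
  exact (apply_inf_eq_inf_comp_of_linearOrder (w a + ·) (fun _ _ h => add_le_add_right h _)
    (add_top _)).symm

namespace IsReducedBasis

variable {F O : Type*} [Field F] [CommRing O] [Algebra O F] {n : ℕ}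
  {w : AddValuation F (WithTop ℚ)} {K : Subfield F} {I : Submodule O (Fin n → F)}
  {ρ ρ' : Fin n → Fin n → F}

theorem vecVal_sum_smul_le (hρ : IsReducedBasis w K O I ρ) {c : Fin n → F} (hc : ∀ j, c j ∈ K)
    (i : Fin n) : vecVal w (∑ j, c j • ρ j) ≤ w (c i) + vecVal w (ρ i) :=
  vecVal_smul w (c i) (ρ i) ▸ hρ.2.2.2.2 c hc i

theorem vecVal_le_of_span_eq (hOK : ∀ a : O, algebraMap O F a ∈ K)
    (hOint : ∀ a : O, 0 ≤ w (algebraMap O F a)) (hρ : IsReducedBasis w K O I ρ)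
    (hspan : Submodule.span O (Set.range ρ') = I) (hsorted : Monotone fun i => vecVal w (ρ' i))
    (k : Fin n) : vecVal w (ρ' k) ≤ vecVal w (ρ k) := by
  obtain ⟨hρI, hρspan, hρind, hρsorted, -⟩ := id hρ
  obtain ⟨A, hA⟩ := exists_sum_algebraMap_smul_eq (F := F) (ρ := ρ) (ρ' := ρ') fun j => by
    rw [hρspan, ← hspan]
    exact Submodule.subset_span (Set.mem_range_self j)
  obtain ⟨B, hB⟩ := exists_sum_algebraMap_smul_eq (F := F) (ρ := ρ') (ρ' := ρ) fun i =>
    hspan ▸ hρI i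
  have det_map (M : Matrix (Fin n) (Fin n) O) :
      (M.map (algebraMap O F)).det = algebraMap O F M.det := (RingHom.map_det _ M).symm
  have hdet := det_mul_det_eq_one_of_linearIndependent (A := A.map (algebraMap O F))
    (B := B.map (algebraMap O F)) hρind hA hB
  rw [det_map, det_map] at hdet
  have hvA : w (algebraMap O F A.det) = 0 :=
    w.map_eq_zero_of_mul_eq_one ((mul_comm _ _).trans hdet) (hOint _) (hOint _)
  by_contra! hk
  have hblock : ∀ j i, k ≤ j → i ≤ k → 0 < w (A.map (algebraMap O F) j i) := by
    intro j i hkj hik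
    by_contra! hAji
    refine hk.not_ge ?_
    calc vecVal w (ρ' k) ≤ vecVal w (ρ' j) := hsorted hkj
      _ ≤ w (A.map (algebraMap O F) j i) + vecVal w (ρ i) := by
        rw [hA j]
        exact hρ.vecVal_sum_smul_le (fun _ => hOK _) i
      _ ≤ vecVal w (ρ i) := add_le_of_nonpos_left hAji
      _ ≤ vecVal w (ρ k) := hρsorted i k hik
  have hpos := w.pos_map_det_of_pos_block (A.map (algebraMap O F)) k (fun _ _ => hOint _) hblock
  rw [det_map, hvA] at hpos
  exact hpos.false

end IsReducedBasis

theorem stmt_15_general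
    (F : Type*) [Field F] (n : ℕ)
    (v : F → WithTop ℚ)
    (hv0 : ∀ x : F, v x = ⊤ ↔ x = 0)
    (hv1 : v 1 = 0)
    (hvmul : ∀ x y : F, v (x * y) = v x + v y)
    (hvadd : ∀ x y : F, min (v x) (v y) ≤ v (x + y))
    (K : Subfield F)
    (O : Type*) [CommRing O] [Algebra O F]
    (hOval : ∀ a : O, algebraMap O F a ∈ K ∧ 0 ≤ v (algebraMap O F a))
    (I : Submodule O (Fin n → F))
    (ρ ρ' : Fin n → Fin n → F)
    (hρ : IsReducedBasis v K O I ρ)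
    (hspan : Submodule.span O (Set.range ρ') = I)
    (hsorted : ∀ i j : Fin n, i ≤ j → vecVal v (ρ' i) ≤ vecVal v (ρ' j)) :
    (∀ k, vecVal v (ρ' k) ≤ vecVal v (ρ k)) ∧
    (IsReducedBasis v K O I ρ' →
      (∀ k, vecVal v (ρ' k) = vecVal v (ρ k)) ∧
      ∀ c : Fin n → Fin n → F, (∀ i j, c i j ∈ K) →
        (∀ i, ρ' i = ∑ j, c i j • ρ j) →
        ∀ i j, vecVal v (ρ i) ≤ v (c i j) + vecVal v (ρ j)) := by
  let w : AddValuation F (WithTop ℚ) := AddValuation.of v ((hv0 0).2 rfl) hv1 hvadd hvmul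
  have hOK a := (hOval a).1
  have hOint a := (hOval a).2
  have hle : ∀ k, vecVal v (ρ' k) ≤ vecVal v (ρ k) :=
    IsReducedBasis.vecVal_le_of_span_eq (w := w) hOK hOint hρ hspan hsorted
  refine ⟨hle, fun hρ' => ?_⟩
  obtain ⟨-, hρspan, -, hρsorted, -⟩ := id hρ
  have heq k := (hle k).antisymm
    (IsReducedBasis.vecVal_le_of_span_eq (w := w) hOK hOint hρ' hρspan hρsorted k)
  refine ⟨heq, fun c hc hcρ i j => ?_⟩
  calc vecVal v (ρ i) = vecVal v (ρ' i) := (heq i).symm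
    _ ≤ w (c i j) + vecVal w (ρ j) := hcρ i ▸ hρ.vecVal_sum_smul_le (w := w) (hc i) j

/-- Let `ρ` be a reduced basis of a full lattice `I` and `ρ'` any other basis
of `I` sorted by increasing valuation.  Then `v(ρ'_k) ≤ v(ρ_k)` for every `k` (valuations of a
reduced basis are maximal).  Consequently two reduced bases have equal valuation sequences, and
the change-of-basis matrix `[c i j]` between two reduced bases satisfies
`v(c i j) ≥ v(ρ i) − v(ρ j)` for all `i, j`. -/
theorem stmt_15
    (F : Type*) [Field F] (n : ℕ) (hn : 0 < n)
    (v : F → WithTop ℚ)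
    (hv0 : ∀ x : F, v x = ⊤ ↔ x = 0)
    (hv1 : v 1 = 0)
    (hvmul : ∀ x y : F, v (x * y) = v x + v y)
    (hvadd : ∀ x y : F, min (v x) (v y) ≤ v (x + y))
    (K : Subfield F)
    (hdisc : ∀ x : F, x ∈ K → x ≠ 0 → ∃ k : ℤ, v x = (k : ℚ))
    (π : F) (hπK : π ∈ K) (hπ : v π = (1 : ℚ))
    (O : Type*) [CommRing O] [Algebra O F]
    (hinj : Function.Injective (algebraMap O F))
    (hOval : ∀ a : O, algebraMap O F a ∈ K ∧ 0 ≤ v (algebraMap O F a))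
    (hOsurj : ∀ y : F, y ∈ K → 0 ≤ v y → ∃ a : O, algebraMap O F a = y)
    (I : Submodule O (Fin n → F)) (hFG : I.FG)
    (hfull : Submodule.span F (I : Set (Fin n → F)) = ⊤)
    (ρ ρ' : Fin n → Fin n → F)
    (hρ : IsReducedBasis v K O I ρ)
    (hmem : ∀ i, ρ' i ∈ I)
    (hspan : Submodule.span O (Set.range ρ') = I)
    (hsorted : ∀ i j : Fin n, i ≤ j → vecVal v (ρ' i) ≤ vecVal v (ρ' j)) :
    (∀ k, vecVal v (ρ' k) ≤ vecVal v (ρ k)) ∧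
    (IsReducedBasis v K O I ρ' →
      (∀ k, vecVal v (ρ' k) = vecVal v (ρ k)) ∧
      ∀ c : Fin n → Fin n → F, (∀ i j, c i j ∈ K) →
        (∀ i, ρ' i = ∑ j, c i j • ρ j) →
        ∀ i j, vecVal v (ρ i) ≤ v (c i j) + vecVal v (ρ j)) :=
  stmt_15_general F n v hv0 hv1 hvmul hvadd K O hOval I ρ ρ' hρ hspan hsorted
end

section
/- Let p ≥ 5 be prime, K = Q_p, R = Q_p⁴, and let χ : Q_p^× → F_p^× be a homomorphism extending the reduction map Z_p^× → F_p^×. Define ψ : R^× → F_p^× by ψ(a,b,c,d) = χ(ab/(cd)). Then ψ vanishes on the diagonally embedded Q_p^×, the orders O₁ = {(a,b,c,d) ∈ Z_p⁴ : a ≡ c, b ≡ d mod p} and O₂ = {(a,b,c,d) ∈ Z_p⁴ : a ≡ d, b ≡ c mod p} each satisfy ψ(Oᵢ^×) = 1, but there is no order O ⊆ Z_p⁴ containing both O₁ and O₂ with ψ(O^×) = 1. -/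
/-- The order `O₁ = {(a,b,c,d) ∈ ℤ_p⁴ : a ≡ c, b ≡ d mod p}`, as a subset of `ℚ_p⁴`. -/
def orderSet₁ (p : ℕ) [Fact p.Prime] : Set (Fin 4 → ℚ_[p]) :=
  {x | (∀ i, ‖x i‖ ≤ 1) ∧ ‖x 0 - x 2‖ ≤ (p : ℝ)⁻¹ ∧ ‖x 1 - x 3‖ ≤ (p : ℝ)⁻¹}

/-- The order `O₂ = {(a,b,c,d) ∈ ℤ_p⁴ : a ≡ d, b ≡ c mod p}`, as a subset of `ℚ_p⁴`. -/
def orderSet₂ (p : ℕ) [Fact p.Prime] : Set (Fin 4 → ℚ_[p]) :=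
  {x | (∀ i, ‖x i‖ ≤ 1) ∧ ‖x 0 - x 3‖ ≤ (p : ℝ)⁻¹ ∧ ‖x 1 - x 2‖ ≤ (p : ℝ)⁻¹}

/-!
For a `p`-adic unit `u`, `χ u` is the residue of `u` mod `p`. Hence `ψ(a,b,c,d) = χ(a)χ(b)/(χ(c)χ(d))`
is trivial as soon as `a ≡ c` and `b ≡ d` (or `a ≡ d` and `b ≡ c`), which gives the admissibility
of `O₁` and `O₂`. On the other hand `x = (x₀, x₃, x₀, x₃) + (0, x₂ - x₀, x₂ - x₀, 0)` writes every
integral `x` with `x₀ + x₁ = x₂ + x₃` as an element of `O₁ + O₂`. Thus a ring containing both orders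
contains `(u, -u, 1, -1)` and its inverse `(u⁻¹, -u⁻¹, 1, -1)` for every `p`-adic unit `u`, and on
these `ψ` takes the value `χ(u)²`. For `u = 2` this is `4 ≠ 1` in `𝔽_p`, because `p ≠ 3`.
-/

lemma Units.norm_eq_one_of_norm_le_one {K : Type*} [NormedDivisionRing K] {x : Kˣ}
    (h : ‖(x : K)‖ ≤ 1) (h' : ‖((x⁻¹ : Kˣ) : K)‖ ≤ 1) : ‖(x : K)‖ = 1 := by
  refine le_antisymm h ?_
  calc (1 : ℝ) = ‖(x : K)‖ * ‖((x⁻¹ : Kˣ) : K)‖ := by rw [← norm_mul, Units.mul_inv, norm_one]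
    _ ≤ ‖(x : K)‖ * 1 := by gcongr
    _ = ‖(x : K)‖ := mul_one _

lemma Units.norm_eq_one_of_forall_norm_le_one {K : Type*} [NormedDivisionRing K]
    {a b c d : Kˣ} (h : ∀ i, ‖![(a : K), (b : K), (c : K), (d : K)] i‖ ≤ 1)
    (h' : ∀ i, ‖![((a⁻¹ : Kˣ) : K), ((b⁻¹ : Kˣ) : K), ((c⁻¹ : Kˣ) : K), ((d⁻¹ : Kˣ) : K)] i‖ ≤ 1) :
    ‖(a : K)‖ = 1 ∧ ‖(b : K)‖ = 1 ∧ ‖(c : K)‖ = 1 ∧ ‖(d : K)‖ = 1 :=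
  ⟨norm_eq_one_of_norm_le_one (h 0) (h' 0), norm_eq_one_of_norm_le_one (h 1) (h' 1),
    norm_eq_one_of_norm_le_one (h 2) (h' 2), norm_eq_one_of_norm_le_one (h 3) (h' 3)⟩

lemma PadicInt.toZMod_eq_of_norm_sub_lt_one {p : ℕ} [Fact p.Prime] {z w : ℤ_[p]}
    (h : ‖z - w‖ < 1) : toZMod z = toZMod w := by
  rw [← sub_eq_zero, ← map_sub, ← RingHom.mem_ker, ker_toZMod, IsLocalRing.mem_maximalIdeal]
  exact mem_nonunits.2 h

lemma Padic.norm_two_eq_one {p : ℕ} [Fact p.Prime] (hp : p ≠ 2) : ‖(2 : ℚ_[p])‖ = 1 := by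
  have h := norm_natCast_eq_one_iff (p := p) (n := 2)
  rw [Nat.cast_ofNat] at h
  exact h.2 ((Nat.coprime_primes Fact.out Nat.prime_two).2 hp)

lemma ZMod.four_ne_one {n : ℕ} (hn : 5 ≤ n) : (4 : ZMod n) ≠ 1 := by
  intro h
  have h' := (ZMod.natCast_eq_natCast_iff' 4 1 n).1 (by exact_mod_cast h)
  rw [Nat.mod_eq_of_lt (by omega), Nat.mod_eq_of_lt (by omega)] at h'
  omega

namespace PadicConductor

variable {p : ℕ} [Fact p.Prime]

def ExtendsReduction (χ : ℚ_[p]ˣ →* (ZMod p)ˣ) : Prop :=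
  ∀ u : ℤ_[p]ˣ, χ (Units.map (PadicInt.Coe.ringHom (p := p)).toMonoidHom u)
    = Units.map (PadicInt.toZMod (p := p)).toMonoidHom u

section Character

variable {χ : ℚ_[p]ˣ →* (ZMod p)ˣ}

lemma ExtendsReduction.val_apply (hχ : ExtendsReduction χ) {u : ℚ_[p]ˣ}
    (hu : ‖(u : ℚ_[p])‖ = 1) : (χ u : ZMod p) = PadicInt.toZMod (PadicInt.mkUnits hu : ℤ_[p]) := by
  have hlift : Units.map PadicInt.Coe.ringHom.toMonoidHom (PadicInt.mkUnits hu) = u := Units.ext rfl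
  calc (χ u : ZMod p) = χ (Units.map PadicInt.Coe.ringHom.toMonoidHom (PadicInt.mkUnits hu)) := by
        rw [hlift]
    _ = _ := congrArg Units.val (hχ _)

lemma ExtendsReduction.val_apply_of_coe_eq (hχ : ExtendsReduction χ) {u : ℚ_[p]ˣ}
    (hu : ‖(u : ℚ_[p])‖ = 1) {z : ℤ_[p]} (hz : (z : ℚ_[p]) = u) :
    (χ u : ZMod p) = PadicInt.toZMod z := by
  rw [hχ.val_apply hu, show (PadicInt.mkUnits hu : ℤ_[p]) = z from PadicInt.ext hz.symm]

lemma ExtendsReduction.apply_eq_of_norm_sub_le (hχ : ExtendsReduction χ) {a c : ℚ_[p]ˣ}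
    (ha : ‖(a : ℚ_[p])‖ = 1) (hc : ‖(c : ℚ_[p])‖ = 1)
    (hac : ‖(a : ℚ_[p]) - c‖ ≤ (p : ℝ)⁻¹) : χ a = χ c := by
  have hp : (1 : ℝ) < p := by exact_mod_cast (Fact.out : p.Prime).one_lt
  ext
  rw [hχ.val_apply ha, hχ.val_apply hc]
  exact PadicInt.toZMod_eq_of_norm_sub_lt_one (hac.trans_lt (inv_lt_one_of_one_lt₀ hp))

lemma ExtendsReduction.apply_mul_mul_inv_eq_one (hχ : ExtendsReduction χ) {a b c d : ℚ_[p]ˣ}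
    (ha : ‖(a : ℚ_[p])‖ = 1) (hb : ‖(b : ℚ_[p])‖ = 1)
    (hc : ‖(c : ℚ_[p])‖ = 1) (hd : ‖(d : ℚ_[p])‖ = 1)
    (hac : ‖(a : ℚ_[p]) - c‖ ≤ (p : ℝ)⁻¹) (hbd : ‖(b : ℚ_[p]) - d‖ ≤ (p : ℝ)⁻¹) :
    χ (a * b * (c * d)⁻¹) = 1 := by
  rw [map_mul, map_mul, map_inv, map_mul, hχ.apply_eq_of_norm_sub_le ha hc hac,
    hχ.apply_eq_of_norm_sub_le hb hd hbd, mul_inv_cancel]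

lemma ExtendsReduction.apply_eq_one_of_mem_orderSet₁ (hχ : ExtendsReduction χ)
    {a b c d : ℚ_[p]ˣ} (h : ![(a : ℚ_[p]), (b : ℚ_[p]), (c : ℚ_[p]), (d : ℚ_[p])] ∈ orderSet₁ p)
    (h' : ![((a⁻¹ : ℚ_[p]ˣ) : ℚ_[p]), ((b⁻¹ : ℚ_[p]ˣ) : ℚ_[p]),
      ((c⁻¹ : ℚ_[p]ˣ) : ℚ_[p]), ((d⁻¹ : ℚ_[p]ˣ) : ℚ_[p])] ∈ orderSet₁ p) :
    χ (a * b * (c * d)⁻¹) = 1 := by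
  obtain ⟨hle, hac, hbd⟩ := h
  obtain ⟨ha, hb, hc, hd⟩ := Units.norm_eq_one_of_forall_norm_le_one hle h'.1
  exact hχ.apply_mul_mul_inv_eq_one ha hb hc hd hac hbd

lemma ExtendsReduction.apply_eq_one_of_mem_orderSet₂ (hχ : ExtendsReduction χ)
    {a b c d : ℚ_[p]ˣ} (h : ![(a : ℚ_[p]), (b : ℚ_[p]), (c : ℚ_[p]), (d : ℚ_[p])] ∈ orderSet₂ p)
    (h' : ![((a⁻¹ : ℚ_[p]ˣ) : ℚ_[p]), ((b⁻¹ : ℚ_[p]ˣ) : ℚ_[p]),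
      ((c⁻¹ : ℚ_[p]ˣ) : ℚ_[p]), ((d⁻¹ : ℚ_[p]ˣ) : ℚ_[p])] ∈ orderSet₂ p) :
    χ (a * b * (c * d)⁻¹) = 1 := by
  obtain ⟨hle, had, hbc⟩ := h
  obtain ⟨ha, hb, hc, hd⟩ := Units.norm_eq_one_of_forall_norm_le_one hle h'.1
  rw [mul_comm c d]
  exact hχ.apply_mul_mul_inv_eq_one ha hb hd hc had hbc

end Character

section Conductor

variable {S : Subring (Fin 4 → ℚ_[p])}

lemma mem_of_add_eq_add (h₁ : orderSet₁ p ⊆ S) (h₂ : orderSet₂ p ⊆ S)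
    {x : Fin 4 → ℚ_[p]} (hx : ∀ i, ‖x i‖ ≤ 1) (hsum : x 0 + x 1 = x 2 + x 3) : x ∈ S := by
  have hdecomp : x = ![x 0, x 3, x 0, x 3] + ![0, x 2 - x 0, x 2 - x 0, 0] := by
    ext i
    fin_cases i <;> simp
    · linear_combination hsum
  have hdiff : ‖x 2 - x 0‖ ≤ 1 := (PadicInt.subring p).sub_mem (hx 2) (hx 0)
  rw [hdecomp]
  refine S.add_mem (h₁ ⟨?_, by simp, by simp⟩) (h₂ ⟨?_, by simp, by simp⟩)
  all_goals
    intro i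
    fin_cases i <;> simp [hx 0, hx 3, hdiff]

lemma neg_pair_mem_of_norm_eq_one (h₁ : orderSet₁ p ⊆ S) (h₂ : orderSet₂ p ⊆ S)
    {u : ℚ_[p]} (hu : ‖u‖ = 1) : ![u, -u, 1, -1] ∈ S :=
  mem_of_add_eq_add h₁ h₂ (fun i => by fin_cases i <;> simp [hu]) (by simp)

lemma apply_mul_self_eq_one {χ : ℚ_[p]ˣ →* (ZMod p)ˣ}
    (h₁ : orderSet₁ p ⊆ S) (h₂ : orderSet₂ p ⊆ S)
    (hS : ∀ a b c d : ℚ_[p]ˣ,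
      ![(a : ℚ_[p]), (b : ℚ_[p]), (c : ℚ_[p]), (d : ℚ_[p])] ∈ S →
      ![((a⁻¹ : ℚ_[p]ˣ) : ℚ_[p]), ((b⁻¹ : ℚ_[p]ˣ) : ℚ_[p]),
        ((c⁻¹ : ℚ_[p]ˣ) : ℚ_[p]), ((d⁻¹ : ℚ_[p]ˣ) : ℚ_[p])] ∈ S →
      χ (a * b * (c * d)⁻¹) = 1)
    {u : ℚ_[p]ˣ} (hu : ‖(u : ℚ_[p])‖ = 1) : χ (u * u) = 1 := by
  have hu' : ‖((u⁻¹ : ℚ_[p]ˣ) : ℚ_[p])‖ = 1 := by rw [Units.val_inv_eq_inv_val, norm_inv, hu, inv_one]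
  have hψ := hS u (-u) 1 (-1) (by simpa using neg_pair_mem_of_norm_eq_one h₁ h₂ hu)
    (by simpa using neg_pair_mem_of_norm_eq_one h₁ h₂ hu')
  rwa [show u * -u * (1 * -1)⁻¹ = u * u by simp] at hψ

end Conductor

end PadicConductor

open PadicConductor

/-- Let `p ≥ 5` be prime, `K = ℚ_p`, `R = ℚ_p⁴`, and `χ : ℚ_p^× → 𝔽_p^×` a
homomorphism extending the reduction map `ℤ_p^× → 𝔽_p^×`.  Define `ψ : R^× → 𝔽_p^×` by
`ψ(a,b,c,d) = χ(ab/(cd))`.  Then `ψ` vanishes on the diagonally embedded `ℚ_p^×`; the orders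
`O₁` and `O₂` above are admissible for `ψ` (i.e. `ψ(Oᵢ^×) = 1`); but there is no order
`O ⊆ ℤ_p⁴` containing both `O₁` and `O₂` with `ψ(O^×) = 1` — so `ψ` has no conductor ring. -/
theorem stmt_16 (p : ℕ) [Fact p.Prime] (hp : 5 ≤ p)
    (χ : ℚ_[p]ˣ →* (ZMod p)ˣ)
    (hχ : ∀ u : ℤ_[p]ˣ,
      χ (Units.map (PadicInt.Coe.ringHom (p := p)).toMonoidHom u)
        = Units.map (PadicInt.toZMod (p := p)).toMonoidHom u) :
    (∀ t : ℚ_[p]ˣ, χ (t * t * (t * t)⁻¹) = 1) ∧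
    (∀ a b c d : ℚ_[p]ˣ,
      (![(a : ℚ_[p]), (b : ℚ_[p]), (c : ℚ_[p]), (d : ℚ_[p])] ∈ orderSet₁ p) →
      (![((a⁻¹ : ℚ_[p]ˣ) : ℚ_[p]), ((b⁻¹ : ℚ_[p]ˣ) : ℚ_[p]),
         ((c⁻¹ : ℚ_[p]ˣ) : ℚ_[p]), ((d⁻¹ : ℚ_[p]ˣ) : ℚ_[p])] ∈ orderSet₁ p) →
      χ (a * b * (c * d)⁻¹) = 1) ∧
    (∀ a b c d : ℚ_[p]ˣ,
      (![(a : ℚ_[p]), (b : ℚ_[p]), (c : ℚ_[p]), (d : ℚ_[p])] ∈ orderSet₂ p) →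
      (![((a⁻¹ : ℚ_[p]ˣ) : ℚ_[p]), ((b⁻¹ : ℚ_[p]ˣ) : ℚ_[p]),
         ((c⁻¹ : ℚ_[p]ˣ) : ℚ_[p]), ((d⁻¹ : ℚ_[p]ˣ) : ℚ_[p])] ∈ orderSet₂ p) →
      χ (a * b * (c * d)⁻¹) = 1) ∧
    ¬ ∃ S : Subring (Fin 4 → ℚ_[p]),
        orderSet₁ p ⊆ S ∧ orderSet₂ p ⊆ S ∧
        (∀ x ∈ S, ∀ i, ‖x i‖ ≤ 1) ∧
        (∀ a b c d : ℚ_[p]ˣ,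
          (![(a : ℚ_[p]), (b : ℚ_[p]), (c : ℚ_[p]), (d : ℚ_[p])] ∈ S) →
          (![((a⁻¹ : ℚ_[p]ˣ) : ℚ_[p]), ((b⁻¹ : ℚ_[p]ˣ) : ℚ_[p]),
             ((c⁻¹ : ℚ_[p]ˣ) : ℚ_[p]), ((d⁻¹ : ℚ_[p]ˣ) : ℚ_[p])] ∈ S) →
          χ (a * b * (c * d)⁻¹) = 1) := by
  refine ⟨fun t => by rw [mul_inv_cancel, map_one],
    fun _ _ _ _ => ExtendsReduction.apply_eq_one_of_mem_orderSet₁ hχ,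
    fun _ _ _ _ => ExtendsReduction.apply_eq_one_of_mem_orderSet₂ hχ, ?_⟩
  rintro ⟨S, h₁, h₂, -, hS⟩
  have h2 : ‖(2 : ℚ_[p])‖ = 1 := Padic.norm_two_eq_one (by omega)
  have hχ2 : (χ (Units.mk0 2 two_ne_zero) : ZMod p) = 2 := by
    rw [ExtendsReduction.val_apply_of_coe_eq hχ h2 (z := 2) rfl, map_ofNat]
  have hsq := congrArg Units.val (apply_mul_self_eq_one h₁ h₂ hS (u := Units.mk0 2 two_ne_zero) h2)
  rw [map_mul, Units.val_mul, hχ2, Units.val_one] at hsq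
  exact ZMod.four_ne_one hp (by linear_combination hsq)
end
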